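/- arXiv:2603.13551 — 4 statements merged into one kernel-verified Lean document; each statement's English description precedes it below -/
import Mathlib

section
/- Let N be a torsionless positively 1-homogeneous nonlinear connection on Ω, with curvature R^μ{}_{αβ}, Ricci scalar Ric(v) := R^μ{}_{μα}v^α, and χ_α := (∂R^γ{}_{αν}/∂v^γ)v^ν. Then at every point of Ω and for every index α: χ_α = ∂Ric(v)/∂v^α − 2 R^γ{}_{γα}. -/
open scoped BigOperators

noncomputable section

/-- `Vec m` is the model space `ℝ^m`. -/
abbrev Vec (m : ℕ) : Type := Fin m → ℝ

variable {m : ℕ}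

/-- Partial derivative in the velocity (second) variable: `∂f/∂v^i (x,v)`. -/
def pdv (f : Vec m → Vec m → ℝ) (i : Fin m) (x v : Vec m) : ℝ :=
  fderiv ℝ (f x) v (Pi.single i 1)

/-- Partial derivative in the position (first) variable: `∂f/∂x^i (x,v)`. -/
def pdx (f : Vec m → Vec m → ℝ) (i : Fin m) (x v : Vec m) : ℝ :=
  fderiv ℝ (fun y => f y v) x (Pi.single i 1)

/-- Vertical Hessian `g_{αβ}(x,v) = ∂²L/∂v^α∂v^β` of the Lagrangian. -/
def gmet (L : Vec m → Vec m → ℝ) (x v : Vec m) : Matrix (Fin m) (Fin m) ℝ :=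
  Matrix.of fun α β => pdv (pdv L β) α x v

/-- Inverse metric `g^{αβ}` (nonsingular matrix inverse). -/
def ginv (L : Vec m → Vec m → ℝ) (x v : Vec m) : Matrix (Fin m) (Fin m) ℝ :=
  (gmet L x v)⁻¹

/-- Geodesic spray coefficients
`G^α = (1/4) g^{αδ}(∂g_{δγ}/∂x^β + ∂g_{δβ}/∂x^γ − ∂g_{βγ}/∂x^δ) v^β v^γ`. -/
def spray (L : Vec m → Vec m → ℝ) (α : Fin m) (x v : Vec m) : ℝ :=
  (1/4) * ∑ δ, ginv L x v α δ *
    (∑ β, ∑ γ,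
      (pdx (fun y w => gmet L y w δ γ) β x v
        + pdx (fun y w => gmet L y w δ β) γ x v
        - pdx (fun y w => gmet L y w β γ) δ x v) * v β * v γ)

/-- The spray nonlinear connection `N^α_μ = ∂G^α/∂v^μ`. -/
def nConn (L : Vec m → Vec m → ℝ) (α μ : Fin m) (x v : Vec m) : ℝ :=
  pdv (spray L α) μ x v

/-- Horizontal derivative `δ_μ f = ∂f/∂x^μ − N^ν_μ ∂f/∂v^ν` for a nonlinear connection `N`. -/
def hderiv (N : Fin m → Fin m → Vec m → Vec m → ℝ) (f : Vec m → Vec m → ℝ)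
    (μ : Fin m) (x v : Vec m) : ℝ :=
  pdx f μ x v - ∑ ν, N ν μ x v * pdv f ν x v

/-- Curvature of the nonlinear connection: `R^μ_{αβ} = δ_α N^μ_β − δ_β N^μ_α`. -/
def curv (N : Fin m → Fin m → Vec m → Vec m → ℝ) (μ α β : Fin m) (x v : Vec m) : ℝ :=
  hderiv N (N μ β) α x v - hderiv N (N μ α) β x v

/-- Ricci scalar `Ric(v) = R^μ{}_{μα} v^α`. -/
def ricciScalar (N : Fin m → Fin m → Vec m → Vec m → ℝ) (x v : Vec m) : ℝ :=
  ∑ α, (∑ μ, curv N μ μ α x v) * v α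

/-- Ricci 1-form component `(Ric_v)_α = R^μ{}_{μα}`. -/
def ricciOne (N : Fin m → Fin m → Vec m → Vec m → ℝ) (α : Fin m) (x v : Vec m) : ℝ :=
  ∑ μ, curv N μ μ α x v

/-- `χ_α := (∂R^γ{}_{αν}/∂v^γ) v^ν`. -/
def chiForm (N : Fin m → Fin m → Vec m → Vec m → ℝ) (α : Fin m) (x v : Vec m) : ℝ :=
  ∑ γ, ∑ ν, pdv (curv N γ α ν) γ x v * v ν

/-- Partial derivative `∂u^α/∂x^μ` of a vector field on the base. -/
def pde (u : Vec m → Vec m) (α μ : Fin m) (x : Vec m) : ℝ :=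
  fderiv ℝ (fun y => u y α) x (Pi.single μ 1)

/-- Covariant derivative `(D_X u)^α = (∂u^α/∂x^μ + N^α_μ(x,u(x))) X^μ`. -/
def covD (L : Vec m → Vec m → ℝ) (u X : Vec m → Vec m) (x : Vec m) : Vec m :=
  fun α => ∑ μ, (pde u α μ x + nConn L α μ x (u x)) * X x μ

/-- Flipped derivative `(D̃_u X)^α = (∂X^α/∂x^μ) u^μ + N^α_μ(x,u(x)) X^μ`. -/
def flipD (L : Vec m → Vec m → ℝ) (u X : Vec m → Vec m) (x : Vec m) : Vec m :=
  fun α => (∑ μ, pde X α μ x * u x μ) + ∑ μ, nConn L α μ x (u x) * X x μ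

/-- Lie bracket `[X,Y]^α = X^μ ∂Y^α/∂x^μ − Y^μ ∂X^α/∂x^μ`. -/
def lieB (X Y : Vec m → Vec m) (x : Vec m) : Vec m :=
  fun α => ∑ μ, (X x μ * pde Y α μ x - Y x μ * pde X α μ x)

/-- Scalar product `g_u(X,Y)(x) = g_{αβ}(x,u(x)) X^α Y^β`. -/
def gProd (L : Vec m → Vec m → ℝ) (u X Y : Vec m → Vec m) (x : Vec m) : ℝ :=
  ∑ α, ∑ β, gmet L x (u x) α β * X x α * Y x β

/-- Directional derivative `∂_X f = X^μ ∂f/∂x^μ`. -/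
def dirD (X : Vec m → Vec m) (f : Vec m → ℝ) (x : Vec m) : ℝ :=
  ∑ μ, X x μ * fderiv ℝ f x (Pi.single μ 1)


namespace S10
/-- directional derivative operator -/
def Dd (w : Vec m × Vec m) (f : Vec m × Vec m → ℝ) : Vec m × Vec m → ℝ :=
  fun q => fderiv ℝ f q w

def Vv (ν : Fin m) : Vec m × Vec m := (0, Pi.single ν 1)
def Xx (μ : Fin m) : Vec m × Vec m := (Pi.single μ 1, 0)

variable {Ω : Set (Vec m × Vec m)} {f g : Vec m × Vec m → ℝ} {q : Vec m × Vec m}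

lemma sm_dd (hΩ : IsOpen Ω) (hf : ContDiffOn ℝ (⊤ : ℕ∞) f Ω) (w : Vec m × Vec m) :
    ContDiffOn ℝ (⊤ : ℕ∞) (Dd w f) Ω :=
  (hf.fderiv_of_isOpen hΩ (by simp)).clm_apply contDiffOn_const

lemma sm_diffAt (hΩ : IsOpen Ω) (hf : ContDiffOn ℝ (⊤ : ℕ∞) f Ω) (hq : q ∈ Ω) :
    DifferentiableAt ℝ f q :=
  ((hf q hq).contDiffAt (hΩ.mem_nhds hq)).differentiableAt (by simp)

lemma Dd_sub (hf : DifferentiableAt ℝ f q) (hg : DifferentiableAt ℝ g q) (w) :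
    Dd w (fun q => f q - g q) q = Dd w f q - Dd w g q := by
  simp [Dd, fderiv_fun_sub hf hg]

lemma Dd_mul (hf : DifferentiableAt ℝ f q) (hg : DifferentiableAt ℝ g q) (w) :
    Dd w (fun q => f q * g q) q = Dd w f q * g q + f q * Dd w g q := by
  simp [Dd, fderiv_fun_mul hf hg]; ring

lemma Dd_sum {ι : Type*} (s : Finset ι) (F : ι → (Vec m × Vec m) → ℝ)
    (hF : ∀ i ∈ s, DifferentiableAt ℝ (F i) q) (w) :
    Dd w (fun q => ∑ i ∈ s, F i q) q = ∑ i ∈ s, Dd w (F i) q := by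
  simp [Dd, fderiv_fun_sum hF]

lemma Dd_coord (ν : Fin m) (w : Vec m × Vec m) :
    Dd w (fun q => q.2 ν) q = w.2 ν := by
  have : (fun q : Vec m × Vec m => q.2 ν) =
      ((ContinuousLinearMap.proj ν).comp (ContinuousLinearMap.snd ℝ (Vec m) (Vec m))) := rfl
  rw [Dd, this, ContinuousLinearMap.fderiv]
  rfl

/-- symmetry of second derivatives -/
lemma Dd_comm (hf : ContDiffAt ℝ (⊤ : ℕ∞) f q) (w w') :
    Dd w (Dd w' f) q = Dd w' (Dd w f) q := by
  have hsymm := hf.isSymmSndFDerivAt (by rw [minSmoothness_of_isRCLikeNormedField]; exact WithTop.coe_le_coe.mpr (le_top : (2 : ℕ∞) ≤ ⊤))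
  have hd : DifferentiableAt ℝ (fderiv ℝ f) q :=
    (hf.fderiv_right (m := 1) (WithTop.coe_le_coe.mpr le_top)).differentiableAt one_ne_zero
  have key : ∀ u u' : Vec m × Vec m, Dd u (Dd u' f) q = fderiv ℝ (fderiv ℝ f) q u u' := by
    intro u u'
    have hL := ((ContinuousLinearMap.apply ℝ ℝ u').hasFDerivAt.comp q hd.hasFDerivAt).fderiv
    have : (Dd u' f) = fun q => (ContinuousLinearMap.apply ℝ ℝ u') (fderiv ℝ f q) := rfl
    rw [Dd, this]
    rw [show (fun q => (ContinuousLinearMap.apply ℝ ℝ u') (fderiv ℝ f q))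
        = (⇑(ContinuousLinearMap.apply ℝ ℝ u') ∘ fderiv ℝ f) from rfl, hL]
    rfl
  rw [key, key, hsymm.eq]

/-- curry bridge: v-partial of curried function equals directional derivative of uncurried. -/
lemma fderiv_curry_snd {F : Vec m × Vec m → ℝ} (hF : DifferentiableAt ℝ F q) (w : Vec m) :
    fderiv ℝ (fun v => F (q.1, v)) q.2 w = fderiv ℝ F q (0, w) := by
  have h : HasFDerivAt (fun v : Vec m => F (q.1, v))
      ((fderiv ℝ F q).comp (ContinuousLinearMap.inr ℝ (Vec m) (Vec m))) q.2 :=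
    hF.hasFDerivAt.comp q.2 (hasFDerivAt_prodMk_right q.1 q.2)
  rw [h.fderiv]; rfl

lemma fderiv_curry_fst {F : Vec m × Vec m → ℝ} (hF : DifferentiableAt ℝ F q) (w : Vec m) :
    fderiv ℝ (fun x => F (x, q.2)) q.1 w = fderiv ℝ F q (w, 0) := by
  have h : HasFDerivAt (fun x : Vec m => F (x, q.2))
      ((fderiv ℝ F q).comp (ContinuousLinearMap.inl ℝ (Vec m) (Vec m))) q.1 :=
    hF.hasFDerivAt.comp q.1 (hasFDerivAt_prodMk_left q.1 q.2)
  rw [h.fderiv]; rfl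

lemma Dd_congr (hΩ : IsOpen Ω) (h : Set.EqOn f g Ω) (hq : q ∈ Ω) (w) :
    Dd w f q = Dd w g q := by
  unfold Dd
  rw [Filter.EventuallyEq.fderiv_eq (h.eventuallyEq_of_mem (hΩ.mem_nhds hq))]

/-- v-partial of a curried function that agrees with `F` on `Ω`. -/
lemma curry_pdv_eq {f₁ : Vec m → Vec m → ℝ} {F : Vec m × Vec m → ℝ}
    (hΩ : IsOpen Ω) (h : ∀ q' ∈ Ω, f₁ q'.1 q'.2 = F q') (hq : q ∈ Ω)
    (hF : DifferentiableAt ℝ F q) (i : Fin m) :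
    fderiv ℝ (f₁ q.1) q.2 (Pi.single i 1) = Dd (Vv i) F q := by
  have hev : (f₁ q.1) =ᶠ[nhds q.2] (fun v => F (q.1, v)) := by
    have hU : IsOpen {v : Vec m | (q.1, v) ∈ Ω} := hΩ.preimage (Continuous.prodMk_right q.1)
    filter_upwards [hU.mem_nhds hq] with v hv
    exact h (q.1, v) hv
  rw [hev.fderiv_eq, fderiv_curry_snd hF]; rfl

/-- x-partial of a curried function that agrees with `F` on `Ω`. -/
lemma curry_pdx_eq {f₁ : Vec m → Vec m → ℝ} {F : Vec m × Vec m → ℝ}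
    (hΩ : IsOpen Ω) (h : ∀ q' ∈ Ω, f₁ q'.1 q'.2 = F q') (hq : q ∈ Ω)
    (hF : DifferentiableAt ℝ F q) (i : Fin m) :
    fderiv ℝ (fun x => f₁ x q.2) q.1 (Pi.single i 1) = Dd (Xx i) F q := by
  have hev : (fun x => f₁ x q.2) =ᶠ[nhds q.1] (fun x => F (x, q.2)) := by
    have hU : IsOpen {x : Vec m | (x, q.2) ∈ Ω} :=
      hΩ.preimage (continuous_id.prodMk continuous_const)
    filter_upwards [hU.mem_nhds hq] with x hx
    exact h (x, q.2) hx
  rw [hev.fderiv_eq, fderiv_curry_fst hF]; rfl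

/-- Euler's theorem for positively 1-homogeneous functions. -/
lemma euler {F : Vec m × Vec m → ℝ} (hΩ : IsOpen Ω) (hq : q ∈ Ω)
    (hF : DifferentiableAt ℝ F q)
    (hhom : ∀ s : ℝ, 0 < s → F (q.1, s • q.2) = s * F q) :
    ∑ ν, Dd (Vv ν) F q * q.2 ν = F q := by
  have hdv : HasFDerivAt (fun v : Vec m => F (q.1, v))
      ((fderiv ℝ F q).comp (ContinuousLinearMap.inr ℝ (Vec m) (Vec m))) ((1:ℝ) • q.2) := by
    rw [one_smul]
    exact hF.hasFDerivAt.comp q.2 (hasFDerivAt_prodMk_right q.1 q.2)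
  have hs : HasDerivAt (fun s : ℝ => s • q.2) q.2 1 := by
    simpa using (hasDerivAt_id (1 : ℝ)).smul_const q.2
  have hcurve : HasDerivAt (fun s : ℝ => F (q.1, s • q.2)) (fderiv ℝ F q (0, q.2)) 1 :=
    by have := hdv.comp_hasDerivAt 1 hs; exact this
  have hev : (fun s : ℝ => F (q.1, s • q.2)) =ᶠ[nhds (1:ℝ)] (fun s => s * F q) := by
    filter_upwards [eventually_gt_nhds (zero_lt_one (α := ℝ))] with s hs'
    exact hhom s hs'
  have hlin : HasDerivAt (fun s : ℝ => s * F q) (F q) 1 := by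
    simpa using (hasDerivAt_id (1 : ℝ)).mul_const (F q)
  have key : fderiv ℝ F q (0, q.2) = F q :=
    (hcurve.congr_of_eventuallyEq hev.symm).unique hlin
  have hsum : ((0 : Vec m), q.2) = ∑ ν, q.2 ν • Vv (m := m) ν := by
    have h2 : ∀ ν : Fin m, q.2 ν • Vv (m := m) ν
        = ((0 : Vec m), (Pi.single ν (q.2 ν) : Vec m)) := by
      intro ν
      unfold Vv
      rw [Prod.smul_mk, smul_zero, ← Pi.single_smul, smul_eq_mul, mul_one]
    rw [Finset.sum_congr rfl fun ν _ => h2 ν]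
    refine Prod.ext ?_ ?_
    · simp [Prod.fst_sum]
    · simp [Prod.snd_sum, Finset.univ_sum_single]
  calc ∑ ν, Dd (Vv ν) F q * q.2 ν = ∑ ν, q.2 ν • fderiv ℝ F q (Vv ν) := by
        exact Finset.sum_congr rfl fun ν _ => by rw [Dd, smul_eq_mul, mul_comm]
    _ = fderiv ℝ F q (0, q.2) := by rw [hsum, map_sum]; simp
    _ = F q := key

lemma sum_mul_single (f : Fin m → ℝ) (ρ : Fin m) :
    ∑ ν, f ν * (Pi.single ρ (1:ℝ) : Vec m) ν = f ρ := by
  rw [Finset.sum_congr rfl (fun ν _ => by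
    rw [Pi.single_apply, mul_ite, mul_one, mul_zero])]
  simp

variable (N : Fin m → Fin m → Vec m → Vec m → ℝ)

/-- uncurried connection coefficients -/
def nn (a b : Fin m) : Vec m × Vec m → ℝ := fun q => N a b q.1 q.2

/-- `Hh a b c = δ_c N^a_b` (horizontal derivative), in uncurried smooth form -/
def Hh (a b c : Fin m) : Vec m × Vec m → ℝ :=
  fun q => Dd (Xx c) (nn N a b) q - ∑ ν, nn N ν c q * Dd (Vv ν) (nn N a b) q

/-- curvature in uncurried form -/
def Cf (μ a b : Fin m) : Vec m × Vec m → ℝ := fun q => Hh N μ b a q - Hh N μ a b q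

/-- Ricci scalar in uncurried form -/
def RicF : Vec m × Vec m → ℝ := fun q => ∑ ν, (∑ γ, Cf N γ γ ν q) * q.2 ν

variable {N}

section Smooth
variable (hΩ : IsOpen Ω) (hN : ∀ a b, ContDiffOn ℝ (⊤ : ℕ∞) (nn N a b) Ω)
include hΩ hN

lemma sm_Hh (a b c : Fin m) : ContDiffOn ℝ (⊤ : ℕ∞) (Hh N a b c) Ω :=
  (sm_dd hΩ (hN a b) _).sub <| ContDiffOn.sum fun ν _ =>
    (hN ν c).mul (sm_dd hΩ (hN a b) _)

lemma sm_Cf (μ a b : Fin m) : ContDiffOn ℝ (⊤ : ℕ∞) (Cf N μ a b) Ω :=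
  (sm_Hh hΩ hN μ b a).sub (sm_Hh hΩ hN μ a b)

omit hΩ hN in
lemma sm_coord (ν : Fin m) : ContDiffOn ℝ (⊤ : ℕ∞) (fun q : Vec m × Vec m => q.2 ν) Ω :=
  (((ContinuousLinearMap.proj ν).comp
    (ContinuousLinearMap.snd ℝ (Vec m) (Vec m))).contDiff).contDiffOn

lemma sm_RicF : ContDiffOn ℝ (⊤ : ℕ∞) (RicF N) Ω :=
  ContDiffOn.sum fun ν _ =>
    (ContDiffOn.sum fun γ _ => sm_Cf hΩ hN γ γ ν).mul (sm_coord ν)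

end Smooth

section Pointwise
variable (hΩ : IsOpen Ω) (hN : ∀ a b, ContDiffOn ℝ (⊤ : ℕ∞) (nn N a b) Ω)
include hΩ hN

lemma pdv_N (hq : q ∈ Ω) (a b i : Fin m) :
    pdv (N a b) i q.1 q.2 = Dd (Vv i) (nn N a b) q := by
  unfold pdv
  exact curry_pdv_eq hΩ (fun _ _ => rfl) hq (sm_diffAt hΩ (hN a b) hq) i

lemma pdx_N (hq : q ∈ Ω) (a b i : Fin m) :
    pdx (N a b) i q.1 q.2 = Dd (Xx i) (nn N a b) q := by
  unfold pdx
  exact curry_pdx_eq hΩ (fun _ _ => rfl) hq (sm_diffAt hΩ (hN a b) hq) i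

lemma hderiv_eq (hq : q ∈ Ω) (a b c : Fin m) :
    hderiv N (N a b) c q.1 q.2 = Hh N a b c q := by
  unfold hderiv Hh
  rw [pdx_N hΩ hN hq]
  exact congrArg _ (Finset.sum_congr rfl fun ν _ => by rw [pdv_N hΩ hN hq]; rfl)

lemma curv_eq (hq : q ∈ Ω) (μ a b : Fin m) :
    curv N μ a b q.1 q.2 = Cf N μ a b q := by
  unfold curv Cf
  rw [hderiv_eq hΩ hN hq, hderiv_eq hΩ hN hq]

lemma ricciOne_eq (hq : q ∈ Ω) (α : Fin m) :
    ricciOne N α q.1 q.2 = ∑ γ, Cf N γ γ α q :=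
  Finset.sum_congr rfl fun γ _ => curv_eq hΩ hN hq γ γ α

lemma ricci_eq (hq : q ∈ Ω) : ricciScalar N q.1 q.2 = RicF N q :=
  Finset.sum_congr rfl fun ν _ => by
    rw [Finset.sum_congr rfl fun γ _ => curv_eq hΩ hN hq γ γ ν]

lemma chi_eq (hq : q ∈ Ω) (α : Fin m) :
    chiForm N α q.1 q.2 = ∑ γ, ∑ ν, Dd (Vv γ) (Cf N γ α ν) q * q.2 ν :=
  Finset.sum_congr rfl fun γ _ => Finset.sum_congr rfl fun ν _ => by
    unfold pdv
    rw [curry_pdv_eq hΩ (fun q' hq' => curv_eq hΩ hN hq' γ α ν) hq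
      (sm_diffAt hΩ (sm_Cf hΩ hN γ α ν) hq) γ]

lemma pdv_ric_eq (hq : q ∈ Ω) (α : Fin m) :
    pdv (ricciScalar N) α q.1 q.2 = Dd (Vv α) (RicF N) q := by
  unfold pdv
  exact curry_pdv_eq hΩ (fun q' hq' => ricci_eq hΩ hN hq') hq
    (sm_diffAt hΩ (sm_RicF hΩ hN) hq) α

end Pointwise

lemma diff_coord (ν : Fin m) :
    DifferentiableAt ℝ (fun q : Vec m × Vec m => q.2 ν) q :=
  (((ContinuousLinearMap.proj ν).comp
    (ContinuousLinearMap.snd ℝ (Vec m) (Vec m))).differentiable).differentiableAt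

section EulerTor
variable (hΩ : IsOpen Ω) (hN : ∀ a b, ContDiffOn ℝ (⊤ : ℕ∞) (nn N a b) Ω)
include hΩ hN

lemma tor (hNtor : ∀ a b c, ∀ p ∈ Ω, pdv (N a b) c p.1 p.2 = pdv (N a c) b p.1 p.2)
    (hq : q ∈ Ω) (a b c : Fin m) :
    Dd (Vv c) (nn N a b) q = Dd (Vv b) (nn N a c) q := by
  rw [← pdv_N hΩ hN hq, ← pdv_N hΩ hN hq]
  exact hNtor a b c q hq

lemma E1 (hNhom : ∀ a b, ∀ p ∈ Ω, ∀ s : ℝ, 0 < s →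
      N a b p.1 (s • p.2) = s * N a b p.1 p.2)
    (hq : q ∈ Ω) (a b : Fin m) :
    ∑ ν, Dd (Vv ν) (nn N a b) q * q.2 ν = nn N a b q :=
  euler hΩ hq (sm_diffAt hΩ (hN a b) hq) (fun s hs => hNhom a b q hq s hs)

omit hN in
lemma Dd_contract {f : Vec m × Vec m → ℝ} (hf : ContDiffOn ℝ (⊤ : ℕ∞) f Ω) (hq : q ∈ Ω)
    (w : Vec m × Vec m) :
    Dd w (fun q' => ∑ ν, Dd (Vv ν) f q' * q'.2 ν) q
      = ∑ ν, (Dd w (Dd (Vv ν) f) q * q.2 ν + Dd (Vv ν) f q * w.2 ν) := by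
  rw [Dd_sum Finset.univ (fun ν q' => Dd (Vv ν) f q' * q'.2 ν) (fun ν _ =>
    ((sm_diffAt hΩ (sm_dd hΩ hf (Vv ν)) hq)).mul (diff_coord ν)) w]
  exact Finset.sum_congr rfl fun ν _ => by
    rw [Dd_mul (sm_diffAt hΩ (sm_dd hΩ hf (Vv ν)) hq) (diff_coord ν), Dd_coord]

variable (hNhom : ∀ a b, ∀ p ∈ Ω, ∀ s : ℝ, 0 < s →
    N a b p.1 (s • p.2) = s * N a b p.1 p.2)
include hNhom

lemma E1x (hq : q ∈ Ω) (a b c : Fin m) :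
    ∑ ν, Dd (Vv ν) (Dd (Xx c) (nn N a b)) q * q.2 ν = Dd (Xx c) (nn N a b) q := by
  have cda : ContDiffAt ℝ (⊤ : ℕ∞) (nn N a b) q := (hN a b q hq).contDiffAt (hΩ.mem_nhds hq)
  have h1 : Set.EqOn (fun q' => ∑ ν, Dd (Vv ν) (nn N a b) q' * q'.2 ν) (nn N a b) Ω :=
    fun q' hq' => E1 hΩ hN hNhom hq' a b
  have h2 := Dd_congr hΩ h1 hq (Xx c)
  rw [Dd_contract hΩ (hN a b) hq (Xx c)] at h2
  calc ∑ ν, Dd (Vv ν) (Dd (Xx c) (nn N a b)) q * q.2 ν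
      = ∑ ν, (Dd (Xx c) (Dd (Vv ν) (nn N a b)) q * q.2 ν
          + Dd (Vv ν) (nn N a b) q * (Xx (m := m) c).2 ν) := by
        refine Finset.sum_congr rfl fun ν _ => ?_
        rw [Dd_comm cda (Vv ν) (Xx c)]
        show _ = _ + _ * (0 : Vec m) ν
        simp
    _ = Dd (Xx c) (nn N a b) q := h2

lemma E0 (hq : q ∈ Ω) (a b ρ : Fin m) :
    ∑ ν, Dd (Vv ν) (Dd (Vv ρ) (nn N a b)) q * q.2 ν = 0 := by
  have cda : ContDiffAt ℝ (⊤ : ℕ∞) (nn N a b) q := (hN a b q hq).contDiffAt (hΩ.mem_nhds hq)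
  have h1 : Set.EqOn (fun q' => ∑ ν, Dd (Vv ν) (nn N a b) q' * q'.2 ν) (nn N a b) Ω :=
    fun q' hq' => E1 hΩ hN hNhom hq' a b
  have h2 := Dd_congr hΩ h1 hq (Vv ρ)
  rw [Dd_contract hΩ (hN a b) hq (Vv ρ)] at h2
  rw [Finset.sum_add_distrib] at h2
  have h3 : ∑ ν, Dd (Vv ν) (nn N a b) q * (Vv (m := m) ρ).2 ν
      = Dd (Vv ρ) (nn N a b) q :=
    sum_mul_single (fun ν => Dd (Vv ν) (nn N a b) q) ρ
  rw [h3] at h2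
  have h4 : ∑ ν, Dd (Vv ρ) (Dd (Vv ν) (nn N a b)) q * q.2 ν = 0 := by linarith
  rw [← h4]
  exact Finset.sum_congr rfl fun ν _ => by rw [Dd_comm cda (Vv ν) (Vv ρ)]

end EulerTor

section Expand
variable (hΩ : IsOpen Ω) (hN : ∀ a b, ContDiffOn ℝ (⊤ : ℕ∞) (nn N a b) Ω)
include hΩ hN

lemma Dd_Hh (hq : q ∈ Ω) (a b c : Fin m) (w : Vec m × Vec m) :
    Dd w (Hh N a b c) q = Dd w (Dd (Xx c) (nn N a b)) q
      - ∑ ν, (Dd w (nn N ν c) q * Dd (Vv ν) (nn N a b) q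
          + nn N ν c q * Dd w (Dd (Vv ν) (nn N a b)) q) := by
  have dA := sm_diffAt hΩ (sm_dd hΩ (hN a b) (Xx c)) hq
  have dB := sm_diffAt hΩ (ContDiffOn.sum fun ν (_ : ν ∈ Finset.univ) =>
    (hN ν c).mul (sm_dd hΩ (hN a b) (Vv ν))) hq
  unfold Hh
  rw [Dd_sub dA dB w, Dd_sum Finset.univ (fun ν x => nn N ν c x * Dd (Vv ν) (nn N a b) x) (fun ν _ =>
    (sm_diffAt hΩ (hN ν c) hq).mul (sm_diffAt hΩ (sm_dd hΩ (hN a b) (Vv ν)) hq)) w]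
  rw [Finset.sum_congr rfl fun ν (_ : ν ∈ Finset.univ) =>
    Dd_mul (sm_diffAt hΩ (hN ν c) hq) (sm_diffAt hΩ (sm_dd hΩ (hN a b) (Vv ν)) hq) w]

lemma Dd_Cf (hq : q ∈ Ω) (μ a b : Fin m) (w : Vec m × Vec m) :
    Dd w (Cf N μ a b) q = Dd w (Hh N μ b a) q - Dd w (Hh N μ a b) q := by
  unfold Cf
  exact Dd_sub (sm_diffAt hΩ (sm_Hh hΩ hN μ b a) hq)
    (sm_diffAt hΩ (sm_Hh hΩ hN μ a b) hq) w

lemma Dd_RicF (hq : q ∈ Ω) (α : Fin m) :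
    Dd (Vv α) (RicF N) q
      = ∑ ν, (∑ γ, Dd (Vv α) (Cf N γ γ ν) q) * q.2 ν + ∑ γ, Cf N γ γ α q := by
  have dS : ∀ ν : Fin m, DifferentiableAt ℝ (fun q' => ∑ γ, Cf N γ γ ν q') q :=
    fun ν => sm_diffAt hΩ (ContDiffOn.sum fun γ _ => sm_Cf hΩ hN γ γ ν) hq
  unfold RicF
  rw [Dd_sum Finset.univ (fun ν q' => (∑ γ, Cf N γ γ ν q') * q'.2 ν) (fun ν _ => (dS ν).mul (diff_coord ν)) (Vv α)]
  have step : ∀ ν : Fin m, Dd (Vv α) (fun q' => (∑ γ, Cf N γ γ ν q') * q'.2 ν) q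
      = (∑ γ, Dd (Vv α) (Cf N γ γ ν) q) * q.2 ν
        + (∑ γ, Cf N γ γ ν q) * (Vv (m := m) α).2 ν := by
    intro ν
    rw [Dd_mul (dS ν) (diff_coord ν), Dd_coord,
      Dd_sum Finset.univ _ (fun γ _ => sm_diffAt hΩ (sm_Cf hΩ hN γ γ ν) hq) (Vv α)]
  rw [Finset.sum_congr rfl fun ν _ => step ν, Finset.sum_add_distrib]
  exact congrArg _ (sum_mul_single (fun ν => ∑ γ, Cf N γ γ ν q) α)

end Expand

section Helpers
variable (hΩ : IsOpen Ω) (hN : ∀ a b, ContDiffOn ℝ (⊤ : ℕ∞) (nn N a b) Ω)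
  (hNhom : ∀ a b, ∀ p ∈ Ω, ∀ s : ℝ, 0 < s → N a b p.1 (s • p.2) = s * N a b p.1 p.2)
include hΩ hN hNhom

/-- contraction of a first v-derivative times constant (constant second) -/
lemma help1 (hq : q ∈ Ω) (a b : Fin m) (C : ℝ) :
    ∑ ν, Dd (Vv ν) (nn N a b) q * C * q.2 ν = C * nn N a b q := by
  calc ∑ ν, Dd (Vv ν) (nn N a b) q * C * q.2 ν
      = ∑ ν, C * (Dd (Vv ν) (nn N a b) q * q.2 ν) :=
        Finset.sum_congr rfl fun ν _ => by ring
    _ = C * ∑ ν, Dd (Vv ν) (nn N a b) q * q.2 ν := (Finset.mul_sum _ _ _).symm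
    _ = C * nn N a b q := by rw [E1 hΩ hN hNhom hq a b]

lemma help1' (hq : q ∈ Ω) (a b : Fin m) (C : ℝ) :
    ∑ ν, C * Dd (Vv ν) (nn N a b) q * q.2 ν = C * nn N a b q := by
  rw [Finset.sum_congr rfl fun ν (_ : ν ∈ Finset.univ) =>
    (by ring : C * Dd (Vv ν) (nn N a b) q * q.2 ν = Dd (Vv ν) (nn N a b) q * C * q.2 ν)]
  exact help1 hΩ hN hNhom hq a b C

lemma help2 (hq : q ∈ Ω) (a b ρ : Fin m) (C : ℝ) :
    ∑ ν, C * Dd (Vv ν) (Dd (Vv ρ) (nn N a b)) q * q.2 ν = 0 := by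
  calc ∑ ν, C * Dd (Vv ν) (Dd (Vv ρ) (nn N a b)) q * q.2 ν
      = C * ∑ ν, Dd (Vv ν) (Dd (Vv ρ) (nn N a b)) q * q.2 ν := by
        rw [Finset.mul_sum]
        exact Finset.sum_congr rfl fun ν _ => by ring
    _ = 0 := by rw [E0 hΩ hN hNhom hq a b ρ, mul_zero]

omit hN hNhom in
lemma help3 (ρ : Fin m) (C : ℝ) :
    ∑ ν, nn N ρ ν q * C * q.2 ν = (∑ ν, nn N ρ ν q * q.2 ν) * C := by
  rw [Finset.sum_mul]
  exact Finset.sum_congr rfl fun ν _ => by ring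

end Helpers

section Main
variable (hΩ : IsOpen Ω) (hN : ∀ a b, ContDiffOn ℝ (⊤ : ℕ∞) (nn N a b) Ω)
  (hNhom : ∀ a b, ∀ p ∈ Ω, ∀ s : ℝ, 0 < s → N a b p.1 (s • p.2) = s * N a b p.1 p.2)
  (hNtor : ∀ a b c, ∀ p ∈ Ω, pdv (N a b) c p.1 p.2 = pdv (N a c) b p.1 p.2)
include hΩ hN hNhom hNtor

lemma chi_val {p : Vec m × Vec m} (hp : p ∈ Ω) (α : Fin m) :
    chiForm N α p.1 p.2
      = ∑ γ, Dd (Xx α) (nn N γ γ) p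
        - ∑ γ, ∑ ν, Dd (Vv α) (Dd (Xx ν) (nn N γ γ)) p * p.2 ν
        + ∑ γ, ∑ ρ, (∑ ν, nn N ρ ν p * p.2 ν)
            * Dd (Vv ρ) (Dd (Vv α) (nn N γ γ)) p := by
  have cda : ∀ a b, ContDiffAt ℝ (⊤ : ℕ∞) (nn N a b) p :=
    fun a b => (hN a b p hp).contDiffAt (hΩ.mem_nhds hp)
  have itor : ∀ (w : Vec m × Vec m) (a b c : Fin m),
      Dd w (Dd (Vv c) (nn N a b)) p = Dd w (Dd (Vv b) (nn N a c)) p :=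
    fun w a b c => Dd_congr hΩ (fun q' hq' => tor hΩ hN hNtor hq' a b c) hp w
  have htor : ∀ a b c : Fin m, Dd (Vv c) (nn N a b) p = Dd (Vv b) (nn N a c) p :=
    fun a b c => tor hΩ hN hNtor hp a b c
  rw [chi_eq hΩ hN hp α]
  have hE : ∀ γ ν : Fin m, Dd (Vv γ) (Cf N γ α ν) p
      = Dd (Vv ν) (Dd (Xx α) (nn N γ γ)) p - Dd (Vv α) (Dd (Xx ν) (nn N γ γ)) p
        - ∑ ρ, (Dd (Vv γ) (nn N ρ α) p * Dd (Vv ν) (nn N γ ρ) p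
            + nn N ρ α p * Dd (Vv ν) (Dd (Vv ρ) (nn N γ γ)) p)
        + ∑ ρ, (Dd (Vv ν) (nn N ρ γ) p * Dd (Vv ρ) (nn N γ α) p
            + nn N ρ ν p * Dd (Vv ρ) (Dd (Vv α) (nn N γ γ)) p) := by
    intro γ ν
    rw [Dd_Cf hΩ hN hp, Dd_Hh hΩ hN hp, Dd_Hh hΩ hN hp]
    have c1 : Dd (Vv γ) (Dd (Xx α) (nn N γ ν)) p
        = Dd (Vv ν) (Dd (Xx α) (nn N γ γ)) p := by
      rw [Dd_comm (cda γ ν) (Vv γ) (Xx α), itor (Xx α) γ ν γ,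
        Dd_comm (cda γ γ) (Xx α) (Vv ν)]
    have c2 : Dd (Vv γ) (Dd (Xx ν) (nn N γ α)) p
        = Dd (Vv α) (Dd (Xx ν) (nn N γ γ)) p := by
      rw [Dd_comm (cda γ α) (Vv γ) (Xx ν), itor (Xx ν) γ α γ,
        Dd_comm (cda γ γ) (Xx ν) (Vv α)]
    have c4 : ∀ ρ, Dd (Vv γ) (Dd (Vv ρ) (nn N γ ν)) p
        = Dd (Vv ν) (Dd (Vv ρ) (nn N γ γ)) p := by
      intro ρ
      rw [itor (Vv γ) γ ν ρ, Dd_comm (cda γ ρ) (Vv γ) (Vv ν), itor (Vv ν) γ ρ γ]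
    have c6 : ∀ ρ, Dd (Vv γ) (Dd (Vv ρ) (nn N γ α)) p
        = Dd (Vv ρ) (Dd (Vv α) (nn N γ γ)) p := by
      intro ρ
      rw [itor (Vv γ) γ α ρ, Dd_comm (cda γ ρ) (Vv γ) (Vv α), itor (Vv α) γ ρ γ,
        Dd_comm (cda γ γ) (Vv α) (Vv ρ)]
    have sA : ∑ ρ, (Dd (Vv γ) (nn N ρ α) p * Dd (Vv ρ) (nn N γ ν) p
          + nn N ρ α p * Dd (Vv γ) (Dd (Vv ρ) (nn N γ ν)) p)
        = ∑ ρ, (Dd (Vv γ) (nn N ρ α) p * Dd (Vv ν) (nn N γ ρ) p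
            + nn N ρ α p * Dd (Vv ν) (Dd (Vv ρ) (nn N γ γ)) p) :=
      Finset.sum_congr rfl fun ρ _ => by rw [htor γ ν ρ, c4 ρ]
    have sB : ∑ ρ, (Dd (Vv γ) (nn N ρ ν) p * Dd (Vv ρ) (nn N γ α) p
          + nn N ρ ν p * Dd (Vv γ) (Dd (Vv ρ) (nn N γ α)) p)
        = ∑ ρ, (Dd (Vv ν) (nn N ρ γ) p * Dd (Vv ρ) (nn N γ α) p
            + nn N ρ ν p * Dd (Vv ρ) (Dd (Vv α) (nn N γ γ)) p) :=
      Finset.sum_congr rfl fun ρ _ => by rw [htor ρ ν γ, c6 ρ]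
    rw [c1, c2, sA, sB]
    ring
  rw [Finset.sum_congr rfl fun γ (_ : γ ∈ Finset.univ) =>
    Finset.sum_congr rfl fun ν (_ : ν ∈ Finset.univ) => by rw [hE γ ν]]
  have key : ∀ γ : Fin m,
      ∑ ν, (Dd (Vv ν) (Dd (Xx α) (nn N γ γ)) p - Dd (Vv α) (Dd (Xx ν) (nn N γ γ)) p
        - ∑ ρ, (Dd (Vv γ) (nn N ρ α) p * Dd (Vv ν) (nn N γ ρ) p
            + nn N ρ α p * Dd (Vv ν) (Dd (Vv ρ) (nn N γ γ)) p)
        + ∑ ρ, (Dd (Vv ν) (nn N ρ γ) p * Dd (Vv ρ) (nn N γ α) p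
            + nn N ρ ν p * Dd (Vv ρ) (Dd (Vv α) (nn N γ γ)) p)) * p.2 ν
      = Dd (Xx α) (nn N γ γ) p
        - ∑ ν, Dd (Vv α) (Dd (Xx ν) (nn N γ γ)) p * p.2 ν
        - ∑ ρ, Dd (Vv γ) (nn N ρ α) p * nn N γ ρ p
        + (∑ ρ, Dd (Vv ρ) (nn N γ α) p * nn N ρ γ p
          + ∑ ρ, (∑ ν, nn N ρ ν p * p.2 ν)
              * Dd (Vv ρ) (Dd (Vv α) (nn N γ γ)) p) := by
    intro γ
    rw [Finset.sum_congr rfl fun ν (_ : ν ∈ Finset.univ) => by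
      rw [add_mul, sub_mul, sub_mul]]
    rw [Finset.sum_add_distrib, Finset.sum_sub_distrib, Finset.sum_sub_distrib]
    rw [E1x hΩ hN hNhom hp γ γ α]
    -- third sum
    have s3 : ∑ ν, (∑ ρ, (Dd (Vv γ) (nn N ρ α) p * Dd (Vv ν) (nn N γ ρ) p
          + nn N ρ α p * Dd (Vv ν) (Dd (Vv ρ) (nn N γ γ)) p)) * p.2 ν
        = ∑ ρ, Dd (Vv γ) (nn N ρ α) p * nn N γ ρ p := by
      rw [Finset.sum_congr rfl fun ν (_ : ν ∈ Finset.univ) => Finset.sum_mul _ _ _,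
        Finset.sum_comm]
      refine Finset.sum_congr rfl fun ρ _ => ?_
      rw [Finset.sum_congr rfl fun ν (_ : ν ∈ Finset.univ) => add_mul _ _ _,
        Finset.sum_add_distrib, help1' hΩ hN hNhom hp γ ρ _,
        help2 hΩ hN hNhom hp γ γ ρ _, add_zero]
    -- fourth sum
    have s4 : ∑ ν, (∑ ρ, (Dd (Vv ν) (nn N ρ γ) p * Dd (Vv ρ) (nn N γ α) p
          + nn N ρ ν p * Dd (Vv ρ) (Dd (Vv α) (nn N γ γ)) p)) * p.2 ν
        = ∑ ρ, Dd (Vv ρ) (nn N γ α) p * nn N ρ γ p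
          + ∑ ρ, (∑ ν, nn N ρ ν p * p.2 ν)
              * Dd (Vv ρ) (Dd (Vv α) (nn N γ γ)) p := by
      rw [Finset.sum_congr rfl fun ν (_ : ν ∈ Finset.univ) => Finset.sum_mul _ _ _,
        Finset.sum_comm, ← Finset.sum_add_distrib]
      refine Finset.sum_congr rfl fun ρ _ => ?_
      rw [Finset.sum_congr rfl fun ν (_ : ν ∈ Finset.univ) => add_mul _ _ _,
        Finset.sum_add_distrib, help1 hΩ hN hNhom hp ρ γ _,
        help3 (N := N) hΩ ρ _]
    rw [s3, s4]
  rw [Finset.sum_congr rfl fun γ (_ : γ ∈ Finset.univ) => key γ]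
  rw [Finset.sum_add_distrib, Finset.sum_sub_distrib, Finset.sum_sub_distrib,
    Finset.sum_add_distrib]
  have hCD : ∑ γ, ∑ ρ, Dd (Vv γ) (nn N ρ α) p * nn N γ ρ p
      = ∑ γ, ∑ ρ, Dd (Vv ρ) (nn N γ α) p * nn N ρ γ p := Finset.sum_comm
  rw [hCD]
  ring

lemma rhs_val {p : Vec m × Vec m} (hp : p ∈ Ω) (α : Fin m) :
    pdv (ricciScalar N) α p.1 p.2 - 2 * ricciOne N α p.1 p.2
      = ∑ γ, Dd (Xx α) (nn N γ γ) p
        - ∑ γ, ∑ ν, Dd (Vv α) (Dd (Xx ν) (nn N γ γ)) p * p.2 ν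
        + ∑ γ, ∑ ρ, (∑ ν, nn N ρ ν p * p.2 ν)
            * Dd (Vv ρ) (Dd (Vv α) (nn N γ γ)) p := by
  have cda : ∀ a b, ContDiffAt ℝ (⊤ : ℕ∞) (nn N a b) p :=
    fun a b => (hN a b p hp).contDiffAt (hΩ.mem_nhds hp)
  have itor : ∀ (w : Vec m × Vec m) (a b c : Fin m),
      Dd w (Dd (Vv c) (nn N a b)) p = Dd w (Dd (Vv b) (nn N a c)) p :=
    fun w a b c => Dd_congr hΩ (fun q' hq' => tor hΩ hN hNtor hq' a b c) hp w
  have htor : ∀ a b c : Fin m, Dd (Vv c) (nn N a b) p = Dd (Vv b) (nn N a c) p :=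
    fun a b c => tor hΩ hN hNtor hp a b c
  rw [pdv_ric_eq hΩ hN hp α, ricciOne_eq hΩ hN hp α, Dd_RicF hΩ hN hp α]
  have hE : ∀ γ ν : Fin m, Dd (Vv α) (Cf N γ γ ν) p
      = Dd (Vv ν) (Dd (Xx γ) (nn N γ α)) p - Dd (Vv α) (Dd (Xx ν) (nn N γ γ)) p
        - ∑ ρ, (Dd (Vv α) (nn N ρ γ) p * Dd (Vv ν) (nn N γ ρ) p
            + nn N ρ γ p * Dd (Vv ν) (Dd (Vv α) (nn N γ ρ)) p)
        + ∑ ρ, (Dd (Vv ν) (nn N ρ α) p * Dd (Vv ρ) (nn N γ γ) p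
            + nn N ρ ν p * Dd (Vv ρ) (Dd (Vv α) (nn N γ γ)) p) := by
    intro γ ν
    rw [Dd_Cf hΩ hN hp, Dd_Hh hΩ hN hp, Dd_Hh hΩ hN hp]
    have c1 : Dd (Vv α) (Dd (Xx γ) (nn N γ ν)) p
        = Dd (Vv ν) (Dd (Xx γ) (nn N γ α)) p := by
      rw [Dd_comm (cda γ ν) (Vv α) (Xx γ), itor (Xx γ) γ ν α,
        Dd_comm (cda γ α) (Xx γ) (Vv ν)]
    have c4 : ∀ ρ, Dd (Vv α) (Dd (Vv ρ) (nn N γ ν)) p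
        = Dd (Vv ν) (Dd (Vv α) (nn N γ ρ)) p := by
      intro ρ
      rw [itor (Vv α) γ ν ρ, Dd_comm (cda γ ρ) (Vv α) (Vv ν)]
    have c6 : ∀ ρ, Dd (Vv α) (Dd (Vv ρ) (nn N γ γ)) p
        = Dd (Vv ρ) (Dd (Vv α) (nn N γ γ)) p :=
      fun ρ => Dd_comm (cda γ γ) (Vv α) (Vv ρ)
    have sA : ∑ ρ, (Dd (Vv α) (nn N ρ γ) p * Dd (Vv ρ) (nn N γ ν) p
          + nn N ρ γ p * Dd (Vv α) (Dd (Vv ρ) (nn N γ ν)) p)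
        = ∑ ρ, (Dd (Vv α) (nn N ρ γ) p * Dd (Vv ν) (nn N γ ρ) p
            + nn N ρ γ p * Dd (Vv ν) (Dd (Vv α) (nn N γ ρ)) p) :=
      Finset.sum_congr rfl fun ρ _ => by rw [htor γ ν ρ, c4 ρ]
    have sB : ∑ ρ, (Dd (Vv α) (nn N ρ ν) p * Dd (Vv ρ) (nn N γ γ) p
          + nn N ρ ν p * Dd (Vv α) (Dd (Vv ρ) (nn N γ γ)) p)
        = ∑ ρ, (Dd (Vv ν) (nn N ρ α) p * Dd (Vv ρ) (nn N γ γ) p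
            + nn N ρ ν p * Dd (Vv ρ) (Dd (Vv α) (nn N γ γ)) p) :=
      Finset.sum_congr rfl fun ρ _ => by rw [htor ρ ν α, c6 ρ]
    rw [c1, sA, sB]
    ring
  have swap : ∑ ν, (∑ γ, Dd (Vv α) (Cf N γ γ ν) p) * p.2 ν
      = ∑ γ, ∑ ν, Dd (Vv α) (Cf N γ γ ν) p * p.2 ν := by
    rw [Finset.sum_congr rfl fun ν (_ : ν ∈ Finset.univ) => Finset.sum_mul _ _ _]
    exact Finset.sum_comm
  rw [swap]
  rw [Finset.sum_congr rfl fun γ (_ : γ ∈ Finset.univ) =>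
    Finset.sum_congr rfl fun ν (_ : ν ∈ Finset.univ) => by rw [hE γ ν]]
  have key : ∀ γ : Fin m,
      ∑ ν, (Dd (Vv ν) (Dd (Xx γ) (nn N γ α)) p - Dd (Vv α) (Dd (Xx ν) (nn N γ γ)) p
        - ∑ ρ, (Dd (Vv α) (nn N ρ γ) p * Dd (Vv ν) (nn N γ ρ) p
            + nn N ρ γ p * Dd (Vv ν) (Dd (Vv α) (nn N γ ρ)) p)
        + ∑ ρ, (Dd (Vv ν) (nn N ρ α) p * Dd (Vv ρ) (nn N γ γ) p
            + nn N ρ ν p * Dd (Vv ρ) (Dd (Vv α) (nn N γ γ)) p)) * p.2 ν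
      = Dd (Xx γ) (nn N γ α) p
        - ∑ ν, Dd (Vv α) (Dd (Xx ν) (nn N γ γ)) p * p.2 ν
        - ∑ ρ, Dd (Vv α) (nn N ρ γ) p * nn N γ ρ p
        + (∑ ρ, Dd (Vv ρ) (nn N γ γ) p * nn N ρ α p
          + ∑ ρ, (∑ ν, nn N ρ ν p * p.2 ν)
              * Dd (Vv ρ) (Dd (Vv α) (nn N γ γ)) p) := by
    intro γ
    rw [Finset.sum_congr rfl fun ν (_ : ν ∈ Finset.univ) => by
      rw [add_mul, sub_mul, sub_mul]]
    rw [Finset.sum_add_distrib, Finset.sum_sub_distrib, Finset.sum_sub_distrib]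
    rw [E1x hΩ hN hNhom hp γ α γ]
    have s3 : ∑ ν, (∑ ρ, (Dd (Vv α) (nn N ρ γ) p * Dd (Vv ν) (nn N γ ρ) p
          + nn N ρ γ p * Dd (Vv ν) (Dd (Vv α) (nn N γ ρ)) p)) * p.2 ν
        = ∑ ρ, Dd (Vv α) (nn N ρ γ) p * nn N γ ρ p := by
      rw [Finset.sum_congr rfl fun ν (_ : ν ∈ Finset.univ) => Finset.sum_mul _ _ _,
        Finset.sum_comm]
      refine Finset.sum_congr rfl fun ρ _ => ?_
      rw [Finset.sum_congr rfl fun ν (_ : ν ∈ Finset.univ) => add_mul _ _ _,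
        Finset.sum_add_distrib, help1' hΩ hN hNhom hp γ ρ _,
        help2 hΩ hN hNhom hp γ ρ α _, add_zero]
    have s4 : ∑ ν, (∑ ρ, (Dd (Vv ν) (nn N ρ α) p * Dd (Vv ρ) (nn N γ γ) p
          + nn N ρ ν p * Dd (Vv ρ) (Dd (Vv α) (nn N γ γ)) p)) * p.2 ν
        = ∑ ρ, Dd (Vv ρ) (nn N γ γ) p * nn N ρ α p
          + ∑ ρ, (∑ ν, nn N ρ ν p * p.2 ν)
              * Dd (Vv ρ) (Dd (Vv α) (nn N γ γ)) p := by
      rw [Finset.sum_congr rfl fun ν (_ : ν ∈ Finset.univ) => Finset.sum_mul _ _ _,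
        Finset.sum_comm, ← Finset.sum_add_distrib]
      refine Finset.sum_congr rfl fun ρ _ => ?_
      rw [Finset.sum_congr rfl fun ν (_ : ν ∈ Finset.univ) => add_mul _ _ _,
        Finset.sum_add_distrib, help1 hΩ hN hNhom hp ρ α _,
        help3 (N := N) hΩ ρ _]
    rw [s3, s4]
  rw [Finset.sum_congr rfl fun γ (_ : γ ∈ Finset.univ) => key γ]
  have hS : ∑ γ, Cf N γ γ α p
      = ∑ γ, (Dd (Xx γ) (nn N γ α) p - ∑ ρ, nn N ρ γ p * Dd (Vv ρ) (nn N γ α) p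
          - (Dd (Xx α) (nn N γ γ) p - ∑ ρ, nn N ρ α p * Dd (Vv ρ) (nn N γ γ) p)) :=
    Finset.sum_congr rfl fun γ _ => rfl
  rw [hS]
  rw [Finset.sum_add_distrib, Finset.sum_sub_distrib, Finset.sum_sub_distrib,
    Finset.sum_add_distrib, Finset.sum_sub_distrib, Finset.sum_sub_distrib]
  have cancel1 : ∑ γ, ∑ ρ, Dd (Vv α) (nn N ρ γ) p * nn N γ ρ p
      = ∑ γ, ∑ ρ, nn N ρ γ p * Dd (Vv ρ) (nn N γ α) p := by
    rw [Finset.sum_congr rfl fun γ (_ : γ ∈ Finset.univ) =>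
      Finset.sum_congr rfl fun ρ (_ : ρ ∈ Finset.univ) => by rw [htor ρ γ α]]
    rw [Finset.sum_comm]
    exact Finset.sum_congr rfl fun γ _ => Finset.sum_congr rfl fun ρ _ => mul_comm _ _
  have cancel2 : ∑ γ, ∑ ρ, Dd (Vv ρ) (nn N γ γ) p * nn N ρ α p
      = ∑ γ, ∑ ρ, nn N ρ α p * Dd (Vv ρ) (nn N γ γ) p :=
    Finset.sum_congr rfl fun γ _ => Finset.sum_congr rfl fun ρ _ => mul_comm _ _
  rw [cancel1, cancel2]
  rw [Finset.sum_sub_distrib]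
  ring

end Main


end S10

/-- Eq. (cnng): for a torsionless positively 1-homogeneous nonlinear connection,
`χ_α = ∂Ric(v)/∂v^α − 2 R^γ{}_{γα}`. -/
theorem statement10 {m : ℕ} (hm : 2 ≤ m)
    (Ω : Set (Vec m × Vec m)) (hΩopen : IsOpen Ω) (hΩne : Ω.Nonempty)
    (hΩslit : ∀ p ∈ Ω, p.2 ≠ 0)
    (hΩcone : ∀ p ∈ Ω, ∀ s : ℝ, 0 < s → (p.1, s • p.2) ∈ Ω)
    (N : Fin m → Fin m → Vec m → Vec m → ℝ)
    (hNsmooth : ∀ α β, ContDiffOn ℝ (⊤ : ℕ∞) (fun p : Vec m × Vec m => N α β p.1 p.2) Ω)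
    (hNhom : ∀ α β, ∀ p ∈ Ω, ∀ s : ℝ, 0 < s → N α β p.1 (s • p.2) = s * N α β p.1 p.2)
    (hNtor : ∀ α β γ, ∀ p ∈ Ω, pdv (N α β) γ p.1 p.2 = pdv (N α γ) β p.1 p.2)
    : ∀ p ∈ Ω, ∀ α,
      chiForm N α p.1 p.2
        = pdv (ricciScalar N) α p.1 p.2 - 2 * ricciOne N α p.1 p.2 := by
  intro p hp α
  have h1 := S10.chi_val (Ω := Ω) hΩopen hNsmooth hNhom hNtor hp α
  have h2 := S10.rhs_val (Ω := Ω) hΩopen hNsmooth hNhom hNtor hp α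
  rw [h1, ← h2]
end
end

section
/- Let N be a torsionless positively 1-homogeneous nonlinear connection on Ω, with curvature R^μ{}_{αβ}, Ricci scalar Ric(v) := R^μ{}_{μα}v^α, and χ_α := (∂R^γ{}_{αν}/∂v^γ)v^ν. Then the following three conditions on Ω are equivalent: (1) χ_α = 0 at every point of Ω and for every α; (2) ∂Ric(v)/∂v^α = 2 R^μ{}_{μα} at every point of Ω and for every α; (3) (1/2) ∂²Ric(v)/∂v^α∂v^β = ∂R^μ{}_{μβ}/∂v^α at every point of Ω and for all α, β (the right-hand side being the Berwald horizontal-horizontal Ricci tensor). -/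
open scoped BigOperators

noncomputable section

variable {m : ℕ}

open scoped ContDiff

namespace S11


variable {m : ℕ}

abbrev EE (m : ℕ) : Type := Vec m × Vec m

def unc (f : Vec m → Vec m → ℝ) : EE m → ℝ := fun p => f p.1 p.2

variable {Ω : Set (EE m)} {p : EE m}

section basic
variable {F G : Type*} [NormedAddCommGroup F] [NormedSpace ℝ F]
  [NormedAddCommGroup G] [NormedSpace ℝ G]

theorem diffAt (hΩ : IsOpen Ω) {g : EE m → F} (hg : ContDiffOn ℝ ∞ g Ω) (hp : p ∈ Ω) :
    DifferentiableAt ℝ g p :=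
  ((hg p hp).contDiffAt (hΩ.mem_nhds hp)).differentiableAt (by simp)

theorem sm_fderiv (hΩ : IsOpen Ω) {g : EE m → ℝ} (hg : ContDiffOn ℝ ∞ g Ω) :
    ContDiffOn ℝ ∞ (fderiv ℝ g) Ω :=
  ((contDiffOn_infty_iff_fderiv_of_isOpen hΩ).1 hg).2

theorem hasFDerivAt_slice_v (g : EE m → ℝ) {x v : Vec m} (hg : DifferentiableAt ℝ g (x, v)) :
    HasFDerivAt (fun w => g (x, w))
      ((fderiv ℝ g (x, v)).comp (((0 : Vec m →L[ℝ] Vec m)).prod (ContinuousLinearMap.id ℝ (Vec m)))) v :=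
  hg.hasFDerivAt.comp v (HasFDerivAt.prodMk (hasFDerivAt_const x v) (hasFDerivAt_id v))

theorem hasFDerivAt_slice_x (g : EE m → ℝ) {x v : Vec m} (hg : DifferentiableAt ℝ g (x, v)) :
    HasFDerivAt (fun y => g (y, v))
      ((fderiv ℝ g (x, v)).comp ((ContinuousLinearMap.id ℝ (Vec m)).prod (0 : Vec m →L[ℝ] Vec m))) x :=
  hg.hasFDerivAt.comp x (HasFDerivAt.prodMk (hasFDerivAt_id x) (hasFDerivAt_const v x))

theorem pdv_congr (hΩ : IsOpen Ω) (hp : p ∈ Ω) {f : Vec m → Vec m → ℝ} {g : EE m → ℝ}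
    (heq : ∀ q ∈ Ω, f q.1 q.2 = g q) (hg : DifferentiableAt ℝ g p) (i : Fin m) :
    pdv f i p.1 p.2 = fderiv ℝ g p (0, Pi.single i 1) := by
  obtain ⟨x, v⟩ := p
  have hmem : {w | (x, w) ∈ Ω} ∈ nhds v :=
    (hΩ.preimage (Continuous.prodMk_right x)).mem_nhds hp
  have h1 : (f x) =ᶠ[nhds v] (fun w => g (x, w)) := by
    filter_upwards [hmem] with w hw
    exact heq _ hw
  have h2 := (hasFDerivAt_slice_v g hg).fderiv
  show fderiv ℝ (f x) v (Pi.single i 1) = _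
  rw [h1.fderiv_eq, h2]
  simp

theorem pdx_congr (hΩ : IsOpen Ω) (hp : p ∈ Ω) {f : Vec m → Vec m → ℝ} {g : EE m → ℝ}
    (heq : ∀ q ∈ Ω, f q.1 q.2 = g q) (hg : DifferentiableAt ℝ g p) (i : Fin m) :
    pdx f i p.1 p.2 = fderiv ℝ g p (Pi.single i 1, 0) := by
  obtain ⟨x, v⟩ := p
  have hmem : {y | (y, v) ∈ Ω} ∈ nhds x :=
    (hΩ.preimage (continuous_id.prodMk continuous_const)).mem_nhds hp
  have h1 : (fun y => f y v) =ᶠ[nhds x] (fun y => g (y, v)) := by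
    filter_upwards [hmem] with y hy
    exact heq _ hy
  have h2 := (hasFDerivAt_slice_x g hg).fderiv
  show fderiv ℝ (fun y => f y v) x (Pi.single i 1) = _
  rw [h1.fderiv_eq, h2]
  simp

theorem hasFDerivAt_pd (hΩ : IsOpen Ω) {g : EE m → ℝ} (hg : ContDiffOn ℝ ∞ g Ω) (hp : p ∈ Ω)
    (w : EE m) :
    HasFDerivAt (fun q => fderiv ℝ g q w)
      ((ContinuousLinearMap.apply ℝ ℝ w).comp (fderiv ℝ (fderiv ℝ g) p)) p :=
  ((ContinuousLinearMap.apply ℝ ℝ w).hasFDerivAt).comp p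
    (diffAt hΩ (sm_fderiv hΩ hg) hp).hasFDerivAt

theorem sm_pd (hΩ : IsOpen Ω) {g : EE m → ℝ} (hg : ContDiffOn ℝ ∞ g Ω) (w : EE m) :
    ContDiffOn ℝ ∞ (fun q => fderiv ℝ g q w) Ω :=
  (ContinuousLinearMap.apply ℝ ℝ w).contDiff.comp_contDiffOn (sm_fderiv hΩ hg)

theorem fderiv_pd (hΩ : IsOpen Ω) {g : EE m → ℝ} (hg : ContDiffOn ℝ ∞ g Ω) (hp : p ∈ Ω)
    (u w : EE m) :
    fderiv ℝ (fun q => fderiv ℝ g q w) p u = fderiv ℝ (fderiv ℝ g) p u w := by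
  rw [(hasFDerivAt_pd hΩ hg hp w).fderiv]; rfl

theorem D2_symm (hΩ : IsOpen Ω) {g : EE m → ℝ} (hg : ContDiffOn ℝ ∞ g Ω) (hp : p ∈ Ω)
    (u w : EE m) :
    fderiv ℝ (fderiv ℝ g) p u w = fderiv ℝ (fderiv ℝ g) p w u := by
  apply second_derivative_symmetric_of_eventually (f := g)
  · filter_upwards [hΩ.mem_nhds hp] with q hq
    exact (diffAt hΩ hg hq).hasFDerivAt
  · exact (diffAt hΩ (sm_fderiv hΩ hg) hp).hasFDerivAt

theorem fderiv_congrOn (hΩ : IsOpen Ω) (hp : p ∈ Ω) {g₁ g₂ : EE m → ℝ}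
    (h : ∀ q ∈ Ω, g₁ q = g₂ q) : fderiv ℝ g₁ p = fderiv ℝ g₂ p :=
  Filter.EventuallyEq.fderiv_eq (by filter_upwards [hΩ.mem_nhds hp] with q hq using h q hq)

theorem clm_apply_pair (L : EE m →L[ℝ] ℝ) (v : Vec m) :
    L (0, v) = ∑ ν, v ν * L (0, Pi.single ν 1) := by
  have hv : v = ∑ ν, v ν • (Pi.single ν 1 : Vec m) := by
    funext j
    rw [Finset.sum_apply]
    simp [Pi.single_apply]
  have h0 : L (0, v) = (L.comp (ContinuousLinearMap.inr ℝ (Vec m) (Vec m))) v := rfl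
  rw [h0]
  conv_lhs => rw [hv]
  rw [map_sum]
  simp [smul_eq_mul]

end basic

def scaleMap (m : ℕ) (s : ℝ) : EE m →L[ℝ] EE m :=
  (ContinuousLinearMap.fst ℝ (Vec m) (Vec m)).prod (s • ContinuousLinearMap.snd ℝ (Vec m) (Vec m))

@[simp] theorem scaleMap_apply (s : ℝ) (q : EE m) : scaleMap m s q = (q.1, s • q.2) := rfl

theorem hom_fderiv (hΩ : IsOpen Ω) (hcone : ∀ q ∈ Ω, ∀ s : ℝ, 0 < s → (q.1, s • q.2) ∈ Ω)
    {g : EE m → ℝ} (hg : ContDiffOn ℝ ∞ g Ω) (k : ℕ)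
    (hhom : ∀ q ∈ Ω, ∀ s : ℝ, 0 < s → g (q.1, s • q.2) = s ^ k * g q)
    (hp : p ∈ Ω) {s : ℝ} (hs : 0 < s) (u : EE m) :
    fderiv ℝ g (p.1, s • p.2) (u.1, s • u.2) = s ^ k * fderiv ℝ g p u := by
  have hM : HasFDerivAt (fun q => g (scaleMap m s q))
      ((fderiv ℝ g (scaleMap m s p)).comp (scaleMap m s)) p :=
    (diffAt hΩ hg (by simpa using hcone p hp s hs)).hasFDerivAt.comp p (scaleMap m s).hasFDerivAt
  have h2 : HasFDerivAt (fun q => s ^ k * g q) (s ^ k • fderiv ℝ g p) p := by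
    have hd : DifferentiableAt ℝ g p := diffAt hΩ hg hp
    exact HasFDerivAt.const_smul (R := ℝ) hd.hasFDerivAt (s ^ k)
  have heq : (fun q => g (scaleMap m s q)) =ᶠ[nhds p] (fun q => s ^ k * g q) := by
    filter_upwards [hΩ.mem_nhds hp] with q hq
    simpa using hhom q hq s hs
  have := heq.fderiv_eq (𝕜 := ℝ)
  rw [hM.fderiv, h2.fderiv] at this
  have happ := congrArg (fun (L : EE m →L[ℝ] ℝ) => L u) this
  simpa using happ

theorem hom_fderiv_x (hΩ : IsOpen Ω) (hcone : ∀ q ∈ Ω, ∀ s : ℝ, 0 < s → (q.1, s • q.2) ∈ Ω)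
    {g : EE m → ℝ} (hg : ContDiffOn ℝ ∞ g Ω) (k : ℕ)
    (hhom : ∀ q ∈ Ω, ∀ s : ℝ, 0 < s → g (q.1, s • q.2) = s ^ k * g q)
    (hp : p ∈ Ω) {s : ℝ} (hs : 0 < s) (e : Vec m) :
    fderiv ℝ g (p.1, s • p.2) (e, 0) = s ^ k * fderiv ℝ g p (e, 0) := by
  have := hom_fderiv hΩ hcone hg k hhom hp hs (e, 0)
  simpa using this

theorem hom_fderiv_v (hΩ : IsOpen Ω) (hcone : ∀ q ∈ Ω, ∀ s : ℝ, 0 < s → (q.1, s • q.2) ∈ Ω)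
    {g : EE m → ℝ} (hg : ContDiffOn ℝ ∞ g Ω) (k : ℕ)
    (hhom : ∀ q ∈ Ω, ∀ s : ℝ, 0 < s → g (q.1, s • q.2) = s ^ k * g q)
    (hp : p ∈ Ω) {s : ℝ} (hs : 0 < s) (e : Vec m) :
    s * fderiv ℝ g (p.1, s • p.2) (0, e) = s ^ k * fderiv ℝ g p (0, e) := by
  have h := hom_fderiv hΩ hcone hg k hhom hp hs (0, e)
  rw [show ((0 : Vec m), s • e) = s • ((0 : Vec m), e) by simp, map_smul] at h
  simpa [smul_eq_mul] using h

theorem euler {g : EE m → ℝ} (hg : DifferentiableAt ℝ g p) (k : ℕ)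
    (hhom : ∀ s : ℝ, 0 < s → g (p.1, s • p.2) = s ^ k * g p) :
    fderiv ℝ g p (0, p.2) = k * g p := by
  have hsm : HasDerivAt (fun s : ℝ => s • p.2) ((1:ℝ) • p.2) 1 :=
    (hasDerivAt_id (1 : ℝ)).smul_const p.2
  have hψ : HasDerivAt (fun s : ℝ => ((p.1, s • p.2) : EE m)) ((0 : Vec m), p.2) 1 := by
    simpa using HasDerivAt.prodMk (hasDerivAt_const (1:ℝ) p.1) hsm
  have hgp : HasFDerivAt g (fderiv ℝ g p) (p.1, (1:ℝ) • p.2) := by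
    simpa using hg.hasFDerivAt
  have hφ : HasDerivAt (fun s : ℝ => g (p.1, s • p.2)) (fderiv ℝ g p ((0 : Vec m), p.2)) 1 := by
    exact hgp.comp_hasDerivAt 1 hψ
  have heq : (fun s : ℝ => g (p.1, s • p.2)) =ᶠ[nhds 1] fun s => s ^ k * g p := by
    filter_upwards [isOpen_Ioi.mem_nhds (show (0:ℝ) < 1 by norm_num)] with s hs
    exact hhom s hs
  have h2 : HasDerivAt (fun s : ℝ => s ^ k * g p) ((k : ℝ) * g p) 1 := by
    simpa using (hasDerivAt_pow k (1 : ℝ)).mul_const (g p)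
  exact hφ.unique (h2.congr_of_eventuallyEq heq)

end S11

namespace S11

variable {m : ℕ} {Ω : Set (EE m)} {p : EE m}
variable {N : Fin m → Fin m → Vec m → Vec m → ℝ}

/-- joint-variable form of `δ_a N^μ_b` -/
def Af (N : Fin m → Fin m → Vec m → Vec m → ℝ) (μ a b : Fin m) : EE m → ℝ := fun q =>
  fderiv ℝ (unc (N μ b)) q (Pi.single a 1, 0)
    - ∑ ρ, unc (N ρ a) q * fderiv ℝ (unc (N μ b)) q (0, Pi.single ρ 1)

/-- joint-variable form of the curvature -/
def Cf (N : Fin m → Fin m → Vec m → Vec m → ℝ) (μ a b : Fin m) : EE m → ℝ := fun q =>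
  Af N μ a b q - Af N μ b a q

section conn

variable (hΩ : IsOpen Ω) (hN : ∀ a b, ContDiffOn ℝ ∞ (unc (N a b)) Ω)

include hΩ hN

theorem sm_Af (μ a b : Fin m) : ContDiffOn ℝ ∞ (Af N μ a b) Ω :=
  (sm_pd hΩ (hN μ b) _).sub
    (ContDiffOn.sum fun ρ _ => (hN ρ a).mul (sm_pd hΩ (hN μ b) _))

theorem sm_Cf (μ a b : Fin m) : ContDiffOn ℝ ∞ (Cf N μ a b) Ω :=
  (sm_Af hΩ hN μ a b).sub (sm_Af hΩ hN μ b a)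

theorem diff_Af (hp : p ∈ Ω) (μ a b : Fin m) : DifferentiableAt ℝ (Af N μ a b) p :=
  diffAt hΩ (sm_Af hΩ hN μ a b) hp

theorem diff_Cf (hp : p ∈ Ω) (μ a b : Fin m) : DifferentiableAt ℝ (Cf N μ a b) p :=
  diffAt hΩ (sm_Cf hΩ hN μ a b) hp

theorem fderiv_Af_v (hp : p ∈ Ω) (μ a b c : Fin m) :
    fderiv ℝ (Af N μ a b) p (0, Pi.single c 1)
      = fderiv ℝ (fderiv ℝ (unc (N μ b))) p (0, Pi.single c 1) (Pi.single a 1, 0)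
        - ∑ ρ, (unc (N ρ a) p * fderiv ℝ (fderiv ℝ (unc (N μ b))) p (0, Pi.single c 1) (0, Pi.single ρ 1)
            + fderiv ℝ (unc (N μ b)) p (0, Pi.single ρ 1) * fderiv ℝ (unc (N ρ a)) p (0, Pi.single c 1)) := by
  have hd2 : ∀ w : EE m, DifferentiableAt ℝ (fun q => fderiv ℝ (unc (N μ b)) q w) p :=
    fun w => (hasFDerivAt_pd hΩ (hN μ b) hp w).differentiableAt
  have hdn : ∀ i j : Fin m, DifferentiableAt ℝ (unc (N i j)) p := fun i j => diffAt hΩ (hN i j) hp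
  have hmul : ∀ ρ : Fin m, DifferentiableAt ℝ
      (fun q => unc (N ρ a) q * fderiv ℝ (unc (N μ b)) q (0, Pi.single ρ 1)) p :=
    fun ρ => (hdn ρ a).mul (hd2 _)
  have e0 : fderiv ℝ (Af N μ a b) p
      = fderiv ℝ (fun q => fderiv ℝ (unc (N μ b)) q (Pi.single a 1, 0)) p
        - fderiv ℝ (fun q => ∑ ρ, unc (N ρ a) q * fderiv ℝ (unc (N μ b)) q (0, Pi.single ρ 1)) p := by
    exact fderiv_fun_sub (hd2 _) (DifferentiableAt.fun_sum fun ρ _ => hmul ρ)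
  rw [e0]
  rw [ContinuousLinearMap.sub_apply, fderiv_pd hΩ (hN μ b) hp,
    fderiv_fun_sum (fun ρ _ => hmul ρ), ContinuousLinearMap.sum_apply]
  congr 1
  refine Finset.sum_congr rfl fun ρ _ => ?_
  rw [fderiv_fun_mul (hdn ρ a) (hd2 _)]
  simp only [ContinuousLinearMap.add_apply, ContinuousLinearMap.coe_smul', Pi.smul_apply,
    smul_eq_mul]
  rw [fderiv_pd hΩ (hN μ b) hp]

variable (hNtor : ∀ a b c, ∀ q ∈ Ω, pdv (N a b) c q.1 q.2 = pdv (N a c) b q.1 q.2)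

include hNtor

theorem tor0 (hp : p ∈ Ω) (i j k : Fin m) :
    fderiv ℝ (unc (N i j)) p (0, Pi.single k 1) = fderiv ℝ (unc (N i k)) p (0, Pi.single j 1) := by
  rw [← pdv_congr hΩ hp (g := unc (N i j)) (fun q _ => rfl) (diffAt hΩ (hN i j) hp) k,
    ← pdv_congr hΩ hp (g := unc (N i k)) (fun q _ => rfl) (diffAt hΩ (hN i k) hp) j]
  exact hNtor i j k p hp

theorem tor1 (hp : p ∈ Ω) (u : EE m) (i j k : Fin m) :
    fderiv ℝ (fderiv ℝ (unc (N i j))) p u (0, Pi.single k 1)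
      = fderiv ℝ (fderiv ℝ (unc (N i k))) p u (0, Pi.single j 1) := by
  rw [← fderiv_pd hΩ (hN i j) hp u _, ← fderiv_pd hΩ (hN i k) hp u _]
  rw [fderiv_congrOn hΩ hp (fun q hq => tor0 hΩ hN hNtor hq i j k)]

theorem tor2 (hp : p ∈ Ω) (w : EE m) (i j k : Fin m) :
    fderiv ℝ (fderiv ℝ (unc (N i j))) p (0, Pi.single k 1) w
      = fderiv ℝ (fderiv ℝ (unc (N i k))) p (0, Pi.single j 1) w := by
  rw [D2_symm hΩ (hN i j) hp, tor1 hΩ hN hNtor hp w i j k, D2_symm hΩ (hN i k) hp]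

theorem cyclic (hp : p ∈ Ω) (μ a b c : Fin m) :
    fderiv ℝ (Cf N μ a b) p (0, Pi.single c 1) + fderiv ℝ (Cf N μ b c) p (0, Pi.single a 1)
      + fderiv ℝ (Cf N μ c a) p (0, Pi.single b 1) = 0 := by
  have hAd : ∀ i j : Fin m, DifferentiableAt ℝ (Af N μ i j) p := fun i j => diff_Af hΩ hN hp μ i j
  have eC : ∀ (i j : Fin m) (u : EE m), fderiv ℝ (Cf N μ i j) p u
      = fderiv ℝ (Af N μ i j) p u - fderiv ℝ (Af N μ j i) p u := by
    intro i j u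
    have : fderiv ℝ (Cf N μ i j) p = fderiv ℝ (Af N μ i j) p - fderiv ℝ (Af N μ j i) p :=
      fderiv_sub (hAd i j) (hAd j i)
    rw [this, ContinuousLinearMap.sub_apply]
  rw [eC a b, eC b c, eC c a,
    fderiv_Af_v hΩ hN hp μ a b c, fderiv_Af_v hΩ hN hp μ b a c,
    fderiv_Af_v hΩ hN hp μ b c a, fderiv_Af_v hΩ hN hp μ c b a,
    fderiv_Af_v hΩ hN hp μ c a b, fderiv_Af_v hΩ hN hp μ a c b]
  have hX1 := tor2 hΩ hN hNtor hp (Pi.single a 1, 0) μ b c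
  have hX2 := tor2 hΩ hN hNtor hp (Pi.single b 1, 0) μ a c
  have hX3 := tor2 hΩ hN hNtor hp (Pi.single c 1, 0) μ b a
  have hS : (∑ ρ, (unc (N ρ a) p * fderiv ℝ (fderiv ℝ (unc (N μ b))) p (0, Pi.single c 1) (0, Pi.single ρ 1)
            + fderiv ℝ (unc (N μ b)) p (0, Pi.single ρ 1) * fderiv ℝ (unc (N ρ a)) p (0, Pi.single c 1)))
      - (∑ ρ, (unc (N ρ b) p * fderiv ℝ (fderiv ℝ (unc (N μ a))) p (0, Pi.single c 1) (0, Pi.single ρ 1)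
            + fderiv ℝ (unc (N μ a)) p (0, Pi.single ρ 1) * fderiv ℝ (unc (N ρ b)) p (0, Pi.single c 1)))
      + ((∑ ρ, (unc (N ρ b) p * fderiv ℝ (fderiv ℝ (unc (N μ c))) p (0, Pi.single a 1) (0, Pi.single ρ 1)
            + fderiv ℝ (unc (N μ c)) p (0, Pi.single ρ 1) * fderiv ℝ (unc (N ρ b)) p (0, Pi.single a 1)))
      - (∑ ρ, (unc (N ρ c) p * fderiv ℝ (fderiv ℝ (unc (N μ b))) p (0, Pi.single a 1) (0, Pi.single ρ 1)
            + fderiv ℝ (unc (N μ b)) p (0, Pi.single ρ 1) * fderiv ℝ (unc (N ρ c)) p (0, Pi.single a 1))))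
      + ((∑ ρ, (unc (N ρ c) p * fderiv ℝ (fderiv ℝ (unc (N μ a))) p (0, Pi.single b 1) (0, Pi.single ρ 1)
            + fderiv ℝ (unc (N μ a)) p (0, Pi.single ρ 1) * fderiv ℝ (unc (N ρ c)) p (0, Pi.single b 1)))
      - (∑ ρ, (unc (N ρ a) p * fderiv ℝ (fderiv ℝ (unc (N μ c))) p (0, Pi.single b 1) (0, Pi.single ρ 1)
            + fderiv ℝ (unc (N μ c)) p (0, Pi.single ρ 1) * fderiv ℝ (unc (N ρ a)) p (0, Pi.single b 1)))) = 0 := by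
    rw [← Finset.sum_sub_distrib, ← Finset.sum_sub_distrib, ← Finset.sum_sub_distrib,
      ← Finset.sum_add_distrib, ← Finset.sum_add_distrib]
    refine Finset.sum_eq_zero fun ρ _ => ?_
    rw [tor2 hΩ hN hNtor hp (0, Pi.single ρ 1) μ b c,
      tor2 hΩ hN hNtor hp (0, Pi.single ρ 1) μ a c,
      tor2 hΩ hN hNtor hp (0, Pi.single ρ 1) μ b a,
      tor0 hΩ hN hNtor hp ρ a c, tor0 hΩ hN hNtor hp ρ b c, tor0 hΩ hN hNtor hp ρ b a]
    ring
  linear_combination hX1 - hX2 - hX3 - hS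

end conn

end S11

namespace S11

variable {m : ℕ} {Ω : Set (EE m)} {p q : EE m}
variable {N : Fin m → Fin m → Vec m → Vec m → ℝ}

def coordCLM (m : ℕ) (b : Fin m) : EE m →L[ℝ] ℝ :=
  (ContinuousLinearMap.proj b).comp (ContinuousLinearMap.snd ℝ (Vec m) (Vec m))

def RicJ (N : Fin m → Fin m → Vec m → Vec m → ℝ) : EE m → ℝ := fun q =>
  ∑ b, (∑ μ, Cf N μ μ b q) * q.2 b

section trans

variable (hΩ : IsOpen Ω) (hN : ∀ a b, ContDiffOn ℝ ∞ (unc (N a b)) Ω)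

include hΩ hN

theorem curv_eq (hp : p ∈ Ω) (μ a b : Fin m) : curv N μ a b p.1 p.2 = Cf N μ a b p := by
  have e1 : ∀ i j k : Fin m, pdv (N i j) k p.1 p.2 = fderiv ℝ (unc (N i j)) p (0, Pi.single k 1) :=
    fun i j k => pdv_congr hΩ hp (g := unc (N i j)) (fun q _ => rfl) (diffAt hΩ (hN i j) hp) k
  have e2 : ∀ i j k : Fin m, pdx (N i j) k p.1 p.2 = fderiv ℝ (unc (N i j)) p (Pi.single k 1, 0) :=
    fun i j k => pdx_congr hΩ hp (g := unc (N i j)) (fun q _ => rfl) (diffAt hΩ (hN i j) hp) k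
  simp only [curv, hderiv, Cf, Af, e1, e2, unc]

theorem ricciOne_eq (hp : p ∈ Ω) (a : Fin m) :
    ricciOne N a p.1 p.2 = ∑ μ, Cf N μ μ a p :=
  Finset.sum_congr rfl fun μ _ => curv_eq hΩ hN hp μ μ a

theorem ric_eq (hq : q ∈ Ω) : ricciScalar N q.1 q.2 = RicJ N q := by
  unfold ricciScalar RicJ
  exact Finset.sum_congr rfl fun b _ => by
    rw [show (∑ μ, curv N μ μ b q.1 q.2) = ∑ μ, Cf N μ μ b q from
      Finset.sum_congr rfl fun μ _ => curv_eq hΩ hN hq μ μ b]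

theorem sm_RicJ : ContDiffOn ℝ ∞ (RicJ N) Ω :=
  ContDiffOn.sum fun b _ =>
    (ContDiffOn.sum fun μ _ => sm_Cf hΩ hN μ μ b).mul ((coordCLM m b).contDiff.contDiffOn)

theorem pdvRic (hp : p ∈ Ω) (a : Fin m) :
    pdv (ricciScalar N) a p.1 p.2 = fderiv ℝ (RicJ N) p (0, Pi.single a 1) :=
  pdv_congr hΩ hp (g := RicJ N) (fun q hq => ric_eq hΩ hN hq)
    (diffAt hΩ (sm_RicJ hΩ hN) hp) a

theorem pdvRicciOne (hp : p ∈ Ω) (a c : Fin m) :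
    pdv (fun y w => ricciOne N a y w) c p.1 p.2
      = ∑ μ, fderiv ℝ (Cf N μ μ a) p (0, Pi.single c 1) := by
  rw [pdv_congr hΩ hp (g := fun q => ∑ μ, Cf N μ μ a q)
    (fun q hq => ricciOne_eq hΩ hN hq a)
    (DifferentiableAt.fun_sum fun μ _ => diff_Cf hΩ hN hp μ μ a) c]
  rw [fderiv_fun_sum (fun μ _ => diff_Cf hΩ hN hp μ μ a), ContinuousLinearMap.sum_apply]

theorem pdvpdvRic (hp : p ∈ Ω) (a b : Fin m) :
    pdv (pdv (ricciScalar N) b) a p.1 p.2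
      = fderiv ℝ (fun q => fderiv ℝ (RicJ N) q (0, Pi.single b 1)) p (0, Pi.single a 1) :=
  pdv_congr hΩ hp (g := fun q => fderiv ℝ (RicJ N) q (0, Pi.single b 1))
    (fun q hq => pdvRic hΩ hN hq b)
    ((hasFDerivAt_pd hΩ (sm_RicJ hΩ hN) hp _).differentiableAt) a

theorem chi_eq (hp : p ∈ Ω) (a : Fin m) :
    chiForm N a p.1 p.2 = ∑ γ, ∑ ν, fderiv ℝ (Cf N γ a ν) p (0, Pi.single γ 1) * p.2 ν := by
  unfold chiForm
  refine Finset.sum_congr rfl fun γ _ => Finset.sum_congr rfl fun ν _ => ?_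
  rw [pdv_congr hΩ hp (g := Cf N γ a ν) (fun q hq => curv_eq hΩ hN hq γ a ν)
    (diff_Cf hΩ hN hp γ a ν) γ]

theorem fderiv_RicJ (hp : p ∈ Ω) (u : EE m) :
    fderiv ℝ (RicJ N) p u = ∑ b, ((∑ μ, fderiv ℝ (Cf N μ μ b) p u) * p.2 b
      + (∑ μ, Cf N μ μ b p) * u.2 b) := by
  have hdC : ∀ b : Fin m, DifferentiableAt ℝ (fun q => ∑ μ, Cf N μ μ b q) p :=
    fun b => DifferentiableAt.fun_sum fun μ _ => diff_Cf hΩ hN hp μ μ b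
  have hdc : ∀ b : Fin m, DifferentiableAt ℝ (fun q : EE m => q.2 b) p :=
    fun b => (coordCLM m b).differentiableAt
  have e0 : fderiv ℝ (RicJ N) p = ∑ b, fderiv ℝ (fun q => (∑ μ, Cf N μ μ b q) * q.2 b) p :=
    fderiv_fun_sum fun b _ => (hdC b).mul (hdc b)
  rw [e0, ContinuousLinearMap.sum_apply]
  refine Finset.sum_congr rfl fun b _ => ?_
  rw [fderiv_fun_mul (hdC b) (hdc b)]
  simp only [ContinuousLinearMap.add_apply, ContinuousLinearMap.coe_smul', Pi.smul_apply,
    smul_eq_mul]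
  rw [show fderiv ℝ (fun q : EE m => q.2 b) p = coordCLM m b from (coordCLM m b).fderiv]
  rw [fderiv_fun_sum (fun μ _ => diff_Cf hΩ hN hp μ μ b), ContinuousLinearMap.sum_apply]
  have : coordCLM m b u = u.2 b := rfl
  rw [this]
  ring

theorem fderiv_RicJ_v (hp : p ∈ Ω) (c : Fin m) :
    fderiv ℝ (RicJ N) p (0, Pi.single c 1)
      = (∑ b, (∑ μ, fderiv ℝ (Cf N μ μ b) p (0, Pi.single c 1)) * p.2 b)
        + (∑ μ, Cf N μ μ c p) := by
  rw [fderiv_RicJ hΩ hN hp, Finset.sum_add_distrib]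
  congr 1
  simp [Pi.single_apply, mul_ite, Finset.sum_ite_eq']

end trans

section hom

variable (hΩ : IsOpen Ω) (hN : ∀ a b, ContDiffOn ℝ ∞ (unc (N a b)) Ω)
variable (hcone : ∀ q ∈ Ω, ∀ s : ℝ, 0 < s → (q.1, s • q.2) ∈ Ω)
variable (hNhom : ∀ i j, ∀ q ∈ Ω, ∀ s : ℝ, 0 < s → unc (N i j) (q.1, s • q.2) = s ^ 1 * unc (N i j) q)

include hΩ hN hcone hNhom

theorem hom_Af (hq : q ∈ Ω) {s : ℝ} (hs : 0 < s) (μ a b : Fin m) :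
    Af N μ a b (q.1, s • q.2) = s ^ 1 * Af N μ a b q := by
  have hx := hom_fderiv_x hΩ hcone (hN μ b) 1 (hNhom μ b) hq hs (Pi.single a 1)
  have hv : ∀ ρ : Fin m, fderiv ℝ (unc (N μ b)) (q.1, s • q.2) (0, Pi.single ρ 1)
      = fderiv ℝ (unc (N μ b)) q (0, Pi.single ρ 1) := by
    intro ρ
    have h := hom_fderiv_v hΩ hcone (hN μ b) 1 (hNhom μ b) hq hs (Pi.single ρ 1)
    rw [pow_one] at h
    exact mul_left_cancel₀ (ne_of_gt hs) h
  unfold Af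
  rw [hx, Finset.sum_congr rfl fun ρ _ => by rw [hv ρ, hNhom ρ a q hq s hs]]
  have h2 : ∑ ρ, (s ^ 1 * unc (N ρ a) q) * fderiv ℝ (unc (N μ b)) q (0, Pi.single ρ 1)
      = s ^ 1 * ∑ ρ, unc (N ρ a) q * fderiv ℝ (unc (N μ b)) q (0, Pi.single ρ 1) := by
    rw [Finset.mul_sum]
    exact Finset.sum_congr rfl fun ρ _ => by ring
  rw [h2]
  ring

theorem hom_Cf (hq : q ∈ Ω) {s : ℝ} (hs : 0 < s) (μ a b : Fin m) :
    Cf N μ a b (q.1, s • q.2) = s ^ 1 * Cf N μ a b q := by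
  unfold Cf
  rw [hom_Af hΩ hN hcone hNhom hq hs μ a b, hom_Af hΩ hN hcone hNhom hq hs μ b a]
  ring

theorem euler_Cf (hp : p ∈ Ω) (μ a b : Fin m) :
    fderiv ℝ (Cf N μ a b) p (0, p.2) = Cf N μ a b p := by
  have h := euler (diff_Cf hΩ hN hp μ a b) 1 (fun s hs => hom_Cf hΩ hN hcone hNhom hp hs μ a b)
  simpa using h

theorem hom_RicJ (hq : q ∈ Ω) {s : ℝ} (hs : 0 < s) :
    RicJ N (q.1, s • q.2) = s ^ 2 * RicJ N q := by
  unfold RicJ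
  rw [Finset.mul_sum]
  refine Finset.sum_congr rfl fun b _ => ?_
  rw [show (∑ μ, Cf N μ μ b (q.1, s • q.2)) = ∑ μ, s ^ 1 * Cf N μ μ b q from
    Finset.sum_congr rfl fun μ _ => hom_Cf hΩ hN hcone hNhom hq hs μ μ b]
  rw [← Finset.mul_sum]
  have h2 : ((q.1, s • q.2) : EE m).2 b = s * q.2 b := rfl
  rw [h2]
  ring

theorem hom_pdRicJ (hq : q ∈ Ω) {s : ℝ} (hs : 0 < s) (b : Fin m) :
    fderiv ℝ (RicJ N) (q.1, s • q.2) (0, Pi.single b 1)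
      = s * fderiv ℝ (RicJ N) q (0, Pi.single b 1) := by
  have h := hom_fderiv_v hΩ hcone (sm_RicJ hΩ hN) 2
    (fun q hq s hs => hom_RicJ hΩ hN hcone hNhom hq hs) hq hs (Pi.single b 1)
  rw [pow_two, mul_assoc] at h
  exact mul_left_cancel₀ (ne_of_gt hs) h

end hom

end S11

namespace S11

variable {m : ℕ} {Ω : Set (EE m)} {p : EE m}
variable {N : Fin m → Fin m → Vec m → Vec m → ℝ}

section key

variable (hΩ : IsOpen Ω) (hN : ∀ a b, ContDiffOn ℝ ∞ (unc (N a b)) Ω)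
  (hcone : ∀ q ∈ Ω, ∀ s : ℝ, 0 < s → (q.1, s • q.2) ∈ Ω)
  (hNhom : ∀ i j, ∀ q ∈ Ω, ∀ s : ℝ, 0 < s → unc (N i j) (q.1, s • q.2) = s ^ 1 * unc (N i j) q)
  (hNtor : ∀ a b c, ∀ q ∈ Ω, pdv (N a b) c q.1 q.2 = pdv (N a c) b q.1 q.2)

include hΩ hN hcone hNhom hNtor

theorem key (hp : p ∈ Ω) (a : Fin m) :
    chiForm N a p.1 p.2 = pdv (ricciScalar N) a p.1 p.2 - 2 * ricciOne N a p.1 p.2 := by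
  rw [chi_eq hΩ hN hp a, pdvRic hΩ hN hp a, ricciOne_eq hΩ hN hp a, fderiv_RicJ_v hΩ hN hp a]
  have hL : ∀ γ ν : Fin m, fderiv ℝ (Cf N γ a ν) p (0, Pi.single γ 1)
      = fderiv ℝ (Cf N γ γ ν) p (0, Pi.single a 1)
        - fderiv ℝ (Cf N γ γ a) p (0, Pi.single ν 1) := by
    intro γ ν
    have hcyc := cyclic hΩ hN hNtor hp γ a ν γ
    have h1 : Cf N γ ν γ = fun q => -(Cf N γ γ ν q) := by
      funext q; simp only [Cf]; ring
    have hskew : fderiv ℝ (Cf N γ ν γ) p (0, Pi.single a 1)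
        = - fderiv ℝ (Cf N γ γ ν) p (0, Pi.single a 1) := by
      rw [h1, fderiv_fun_neg]
      simp
    linarith [hcyc, hskew]
  rw [Finset.sum_congr rfl fun γ _ => Finset.sum_congr rfl fun ν _ => by rw [hL γ ν]]
  have hEu : ∀ γ : Fin m, ∑ ν, fderiv ℝ (Cf N γ γ a) p (0, Pi.single ν 1) * p.2 ν
      = Cf N γ γ a p := by
    intro γ
    rw [Finset.sum_congr rfl fun ν _ =>
        mul_comm (fderiv ℝ (Cf N γ γ a) p (0, Pi.single ν 1)) (p.2 ν),
      ← clm_apply_pair (fderiv ℝ (Cf N γ γ a) p) p.2]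
    exact euler_Cf hΩ hN hcone hNhom hp γ γ a
  have step1 : ∑ γ, ∑ ν, (fderiv ℝ (Cf N γ γ ν) p (0, Pi.single a 1)
        - fderiv ℝ (Cf N γ γ a) p (0, Pi.single ν 1)) * p.2 ν
      = (∑ γ, ∑ ν, fderiv ℝ (Cf N γ γ ν) p (0, Pi.single a 1) * p.2 ν)
        - ∑ γ, Cf N γ γ a p := by
    rw [← Finset.sum_sub_distrib]
    refine Finset.sum_congr rfl fun γ _ => ?_
    rw [← hEu γ, ← Finset.sum_sub_distrib]
    exact Finset.sum_congr rfl fun ν _ => by ring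
  rw [step1]
  have step2 : ∑ γ, ∑ ν, fderiv ℝ (Cf N γ γ ν) p (0, Pi.single a 1) * p.2 ν
      = ∑ b, (∑ μ, fderiv ℝ (Cf N μ μ b) p (0, Pi.single a 1)) * p.2 b := by
    rw [Finset.sum_comm]
    exact Finset.sum_congr rfl fun b _ => by rw [Finset.sum_mul]
  rw [step2]
  ring

end key

end S11


/-- Proposition (Prop. 4.6): for a torsionless positively 1-homogeneous nonlinear
connection, the conditions `χ_α = 0`, `∂Ric(v)/∂v^α = 2R^μ{}_{μα}` and
`(1/2)∂²Ric(v)/∂v^α∂v^β = ∂R^μ{}_{μβ}/∂v^α` are equivalent on `Ω`. -/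
theorem statement11 {m : ℕ} (hm : 2 ≤ m)
    (Ω : Set (Vec m × Vec m)) (hΩopen : IsOpen Ω) (hΩne : Ω.Nonempty)
    (hΩslit : ∀ p ∈ Ω, p.2 ≠ 0)
    (hΩcone : ∀ p ∈ Ω, ∀ s : ℝ, 0 < s → (p.1, s • p.2) ∈ Ω)
    (N : Fin m → Fin m → Vec m → Vec m → ℝ)
    (hNsmooth : ∀ α β, ContDiffOn ℝ (⊤ : ℕ∞) (fun p : Vec m × Vec m => N α β p.1 p.2) Ω)
    (hNhom : ∀ α β, ∀ p ∈ Ω, ∀ s : ℝ, 0 < s → N α β p.1 (s • p.2) = s * N α β p.1 p.2)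
    (hNtor : ∀ α β γ, ∀ p ∈ Ω, pdv (N α β) γ p.1 p.2 = pdv (N α γ) β p.1 p.2)
    : ((∀ p ∈ Ω, ∀ α, chiForm N α p.1 p.2 = 0)
        ↔ (∀ p ∈ Ω, ∀ α,
            pdv (ricciScalar N) α p.1 p.2 = 2 * ricciOne N α p.1 p.2))
      ∧ ((∀ p ∈ Ω, ∀ α,
            pdv (ricciScalar N) α p.1 p.2 = 2 * ricciOne N α p.1 p.2)
        ↔ (∀ p ∈ Ω, ∀ α β,
            (1/2) * pdv (pdv (ricciScalar N) β) α p.1 p.2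
              = pdv (fun y w => ricciOne N β y w) α p.1 p.2)) := by
  have hN : ∀ a b, ContDiffOn ℝ ∞ (S11.unc (N a b)) Ω := fun a b => (hNsmooth a b).of_le (by simp)
  have hcone : ∀ q ∈ Ω, ∀ s : ℝ, 0 < s → ((q.1, s • q.2) : S11.EE m) ∈ Ω :=
    fun q hq s hs => hΩcone q hq s hs
  have hNhomU : ∀ i j, ∀ q ∈ Ω, ∀ s : ℝ, 0 < s →
      S11.unc (N i j) (q.1, s • q.2) = s ^ 1 * S11.unc (N i j) q := by
    intro i j q hq s hs
    rw [pow_one]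
    exact hNhom i j q hq s hs
  constructor
  · constructor
    · intro h p hp α
      have hk := S11.key hΩopen hN hcone hNhomU hNtor hp α
      rw [h p hp α] at hk
      linarith
    · intro h p hp α
      have hk := S11.key hΩopen hN hcone hNhomU hNtor hp α
      rw [h p hp α] at hk
      linarith
  · constructor
    · intro H2 p hp α β
      rw [S11.pdvpdvRic hΩopen hN hp α β, S11.pdvRicciOne hΩopen hN hp β α]
      have heqg : ∀ q ∈ Ω, fderiv ℝ (S11.RicJ N) q (0, Pi.single β 1)
          = 2 * ∑ μ, S11.Cf N μ μ β q := by
        intro q hq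
        rw [← S11.pdvRic hΩopen hN hq β, H2 q hq β, S11.ricciOne_eq hΩopen hN hq β]
      rw [S11.fderiv_congrOn hΩopen hp heqg]
      have hdsum : DifferentiableAt ℝ (fun q => ∑ μ, S11.Cf N μ μ β q) p :=
        DifferentiableAt.fun_sum fun μ _ => S11.diff_Cf hΩopen hN hp μ μ β
      rw [fderiv_const_mul hdsum 2]
      simp only [ContinuousLinearMap.coe_smul', Pi.smul_apply, smul_eq_mul]
      rw [fderiv_fun_sum (fun μ _ => S11.diff_Cf hΩopen hN hp μ μ β),
        ContinuousLinearMap.sum_apply]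
      ring
    · intro H3 p hp α
      rw [S11.pdvRic hΩopen hN hp α, S11.ricciOne_eq hΩopen hN hp α]
      set Φ : S11.EE m → ℝ :=
        fun q => fderiv ℝ (S11.RicJ N) q (0, Pi.single α 1) - 2 * ∑ μ, S11.Cf N μ μ α q with hΦ
      have hdPd : ∀ q ∈ Ω, DifferentiableAt ℝ
          (fun q' => fderiv ℝ (S11.RicJ N) q' (0, Pi.single α 1)) q :=
        fun q hq => (S11.hasFDerivAt_pd hΩopen (S11.sm_RicJ hΩopen hN) hq _).differentiableAt
      have hdsum : ∀ q ∈ Ω, DifferentiableAt ℝ (fun q' => (2:ℝ) * ∑ μ, S11.Cf N μ μ α q') q :=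
        fun q hq => (DifferentiableAt.fun_sum fun μ _ => S11.diff_Cf hΩopen hN hq μ μ α).const_mul 2
      have hdΦ : ∀ q ∈ Ω, DifferentiableAt ℝ Φ q := fun q hq => (hdPd q hq).sub (hdsum q hq)
      have hder : ∀ c : Fin m, fderiv ℝ Φ p (0, Pi.single c 1) = 0 := by
        intro c
        have e : fderiv ℝ Φ p = fderiv ℝ (fun q' => fderiv ℝ (S11.RicJ N) q' (0, Pi.single α 1)) p
            - fderiv ℝ (fun q' => (2:ℝ) * ∑ μ, S11.Cf N μ μ α q') p :=
          fderiv_sub (hdPd p hp) (hdsum p hp)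
        rw [e, ContinuousLinearMap.sub_apply]
        have v1 : fderiv ℝ (fun q' => fderiv ℝ (S11.RicJ N) q' (0, Pi.single α 1)) p
            (0, Pi.single c 1) = pdv (pdv (ricciScalar N) α) c p.1 p.2 :=
          (S11.pdvpdvRic hΩopen hN hp c α).symm
        have v2 : fderiv ℝ (fun q' => (2:ℝ) * ∑ μ, S11.Cf N μ μ α q') p (0, Pi.single c 1)
            = 2 * pdv (fun y w => ricciOne N α y w) c p.1 p.2 := by
          rw [fderiv_const_mul (DifferentiableAt.fun_sum fun μ _ =>
            S11.diff_Cf hΩopen hN hp μ μ α) 2]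
          simp only [ContinuousLinearMap.coe_smul', Pi.smul_apply, smul_eq_mul]
          rw [S11.pdvRicciOne hΩopen hN hp α c,
            fderiv_fun_sum (fun μ _ => S11.diff_Cf hΩopen hN hp μ μ α),
            ContinuousLinearMap.sum_apply]
        rw [v1, v2]
        have h3 := H3 p hp c α
        linarith
      have homΦ : ∀ s : ℝ, 0 < s → Φ (p.1, s • p.2) = s ^ 1 * Φ p := by
        intro s hs
        have h1 := S11.hom_pdRicJ hΩopen hN hcone hNhomU hp hs α
        have h2 : (∑ μ, S11.Cf N μ μ α ((p.1, s • p.2) : S11.EE m)) = s * ∑ μ, S11.Cf N μ μ α p := by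
          rw [Finset.mul_sum]
          refine Finset.sum_congr rfl fun μ _ => ?_
          rw [S11.hom_Cf hΩopen hN hcone hNhomU hp hs μ μ α]
          ring
        simp only [hΦ]
        rw [h1, h2]
        ring
      have heuler := S11.euler (hdΦ p hp) 1 homΦ
      have hzero : fderiv ℝ Φ p (0, p.2) = 0 := by
        rw [S11.clm_apply_pair (fderiv ℝ Φ p) p.2]
        exact Finset.sum_eq_zero fun ν _ => by rw [hder ν]; ring
      rw [hzero] at heuler
      have hΦ0 : Φ p = 0 := by simpa using heuler.symm
      simp only [hΦ] at hΦ0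
      linarith
end
end

section
/- Suppose Λ(τ) < ∞ for every τ ∈ ℝ. Then Λ : ℝ → ℝ is differentiable and satisfies the differential equation 1 + κ(τ)Λ(τ) + Λ'(τ) = 0 for all τ ∈ ℝ. -/
/-!
With a primitive `P` of `κ`, the integrand factors as `exp (-P τ) * exp (P ρ)`, so
`Λ τ = exp (-P τ) * ∫_τ^∞ exp (P ρ) dρ`. The tail integral has derivative `-exp (P τ)` by the
fundamental theorem of calculus, and the product rule gives `Λ' = -κ Λ - 1`.
-/

open MeasureTheory Set

theorem hasDerivAt_integral_Ioi {E : Type*} [NormedAddCommGroup E] [NormedSpace ℝ E]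
    [CompleteSpace E] {f : ℝ → E} {a x : ℝ} (hf : IntegrableOn f (Ioi a)) (hax : a < x)
    (hfx : ContinuousAt f x) :
    HasDerivAt (fun t => ∫ y in Ioi t, f y) (-f x) x := by
  have hIoi : Ioi a ∈ nhds x := Ioi_mem_nhds hax
  have hFTC : HasDerivAt (fun t => ∫ y in a..t, f y) (f x) x :=
    intervalIntegral.integral_hasDerivAt_right
      ((intervalIntegrable_iff_integrableOn_Ioc_of_le hax.le).2 (hf.mono_set Ioc_subset_Ioi_self))
      (AEStronglyMeasurable.stronglyMeasurableAtFilter_of_mem hf.1 hIoi) hfx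
  refine (hFTC.const_sub (∫ y in Ioi a, f y)).congr_of_eventuallyEq ?_
  filter_upwards [hIoi] with t ht
  rw [← intervalIntegral.integral_Ioi_sub_Ioi hf (le_of_lt ht), sub_sub_cancel]

theorem exp_intervalIntegral_eq_mul {κ : ℝ → ℝ} (hκ : Continuous κ) (τ ρ : ℝ) :
    Real.exp (∫ s in τ..ρ, κ s) =
      Real.exp (-∫ s in (0 : ℝ)..τ, κ s) * Real.exp (∫ s in (0 : ℝ)..ρ, κ s) := by
  rw [← Real.exp_add, ← intervalIntegral.integral_interval_sub_left (hκ.intervalIntegrable _ _)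
    (hκ.intervalIntegrable _ _), neg_add_eq_sub]

/-- Lemma (Lemma 5.2, Eq. (biw)): if `Λ(τ) = ∫_τ^∞ exp(∫_τ^ρ κ(s) ds) dρ` is finite
for every `τ`, then `Λ` is differentiable and `1 + κ Λ + Λ' = 0`. -/
theorem statement13 (κ : ℝ → ℝ) (hκ : Continuous κ)
    (h : ∀ τ : ℝ, IntegrableOn (fun ρ => Real.exp (∫ s in τ..ρ, κ s)) (Set.Ioi τ)) :
    ∀ τ : ℝ,
      HasDerivAt (fun τ' => ∫ ρ in Set.Ioi τ', Real.exp (∫ s in τ'..ρ, κ s))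
        (-(1 + κ τ * ∫ ρ in Set.Ioi τ, Real.exp (∫ s in τ..ρ, κ s))) τ := by
  intro τ
  set P : ℝ → ℝ := fun t => ∫ s in (0 : ℝ)..t, κ s
  have hP : ∀ t, HasDerivAt P (κ t) t := fun t =>
    (hκ.integral_hasStrictDerivAt 0 t).hasDerivAt
  have hΛ : (fun τ' => ∫ ρ in Ioi τ', Real.exp (∫ s in τ'..ρ, κ s)) =
      fun t => Real.exp (-P t) * ∫ ρ in Ioi t, Real.exp (P ρ) := by
    funext t
    simp_rw [exp_intervalIntegral_eq_mul hκ t, integral_const_mul]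
    rfl
  have hint : IntegrableOn (fun ρ => Real.exp (P ρ)) (Ioi (τ - 1)) := by
    refine IntegrableOn.congr_fun ((h (τ - 1)).const_mul (Real.exp (P (τ - 1))))
      (fun ρ _ => ?_) measurableSet_Ioi
    rw [exp_intervalIntegral_eq_mul hκ (τ - 1) ρ, ← mul_assoc, ← Real.exp_add, add_neg_cancel,
      Real.exp_zero, one_mul]
  have hG := hasDerivAt_integral_Ioi hint (by linarith) (hP τ).continuousAt.rexp
  have hE : HasDerivAt (fun t => Real.exp (-P t)) (Real.exp (-P τ) * -κ τ) τ := (hP τ).neg.exp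
  rw [hΛ]
  refine (hE.mul hG).congr_deriv ?_
  rw [congrFun hΛ τ]
  have hcancel : Real.exp (-P τ) * Real.exp (P τ) = 1 := by rw [← Real.exp_add]; simp
  linear_combination -hcancel
end

section
/- Let m ≥ 3 and let L be a pseudo-Finsler Lagrangian on Ω with spray nonlinear connection N, nonlinear curvature R^μ{}_{αβ}, and Ricci scalar Ric(v) := R^μ{}_{μα}v^α. Then the Akbar-Zadeh vacuum Einstein equation ∂²Ric(v)/∂v^α∂v^β − (1/2)(g^{μν}∂²Ric(v)/∂v^μ∂v^ν)·g_{αβ} = 0 (for all α, β, at every point of Ω) holds if and only if Ric(v) = 0 at every point of Ω. -/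
open scoped BigOperators

noncomputable section

variable {m : ℕ}

/-- joint smoothness of a two-argument function on `Ω`. -/
def Smooth2 (Ω : Set (Vec m × Vec m)) (f : Vec m → Vec m → ℝ) : Prop :=
  ContDiffOn ℝ (⊤ : ℕ∞) (fun p : Vec m × Vec m => f p.1 p.2) Ω

/-- positive homogeneity of degree `k` in the second variable, on `Ω`. -/
def Hom2 (Ω : Set (Vec m × Vec m)) (k : ℕ) (f : Vec m → Vec m → ℝ) : Prop :=
  ∀ p ∈ Ω, ∀ s : ℝ, 0 < s → f p.1 (s • p.2) = s ^ k * f p.1 p.2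

section core
variable {Ω : Set (Vec m × Vec m)} (hΩ : IsOpen Ω)
include hΩ

theorem slice_v_mem_nhds {p : Vec m × Vec m} (hp : p ∈ Ω) :
    {w | (p.1, w) ∈ Ω} ∈ nhds p.2 :=
  (hΩ.preimage (Continuous.prodMk_right p.1)).mem_nhds hp

theorem slice_x_mem_nhds {p : Vec m × Vec m} (hp : p ∈ Ω) :
    {y | (y, p.2) ∈ Ω} ∈ nhds p.1 :=
  (hΩ.preimage (continuous_id.prodMk continuous_const)).mem_nhds hp

variable {f : Vec m → Vec m → ℝ}

theorem Smooth2.diffAt (hf : Smooth2 Ω f) {p : Vec m × Vec m} (hp : p ∈ Ω) :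
    DifferentiableAt ℝ (fun q : Vec m × Vec m => f q.1 q.2) p :=
  (hf.contDiffAt (hΩ.mem_nhds hp)).differentiableAt (by simp)

theorem Smooth2.hasFDerivAt_v (hf : Smooth2 Ω f) {p : Vec m × Vec m} (hp : p ∈ Ω) :
    HasFDerivAt (f p.1)
      ((fderiv ℝ (fun q : Vec m × Vec m => f q.1 q.2) p).comp
        (ContinuousLinearMap.inr ℝ (Vec m) (Vec m))) p.2 :=
  by have := ((hf.diffAt hΩ hp).hasFDerivAt : HasFDerivAt (fun q : Vec m × Vec m => f q.1 q.2) _ (p.1, p.2)).comp p.2 (hasFDerivAt_prodMk_right (𝕜 := ℝ) p.1 p.2); exact this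

theorem Smooth2.hasFDerivAt_x (hf : Smooth2 Ω f) {p : Vec m × Vec m} (hp : p ∈ Ω) :
    HasFDerivAt (fun y => f y p.2)
      ((fderiv ℝ (fun q : Vec m × Vec m => f q.1 q.2) p).comp
        (ContinuousLinearMap.inl ℝ (Vec m) (Vec m))) p.1 :=
  by have := ((hf.diffAt hΩ hp).hasFDerivAt : HasFDerivAt (fun q : Vec m × Vec m => f q.1 q.2) _ (p.1, p.2)).comp p.1 (hasFDerivAt_prodMk_left (𝕜 := ℝ) p.1 p.2); exact this

theorem Smooth2.diffAt_v (hf : Smooth2 Ω f) {p : Vec m × Vec m} (hp : p ∈ Ω) :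
    DifferentiableAt ℝ (f p.1) p.2 :=
  (hf.hasFDerivAt_v hΩ hp).differentiableAt

theorem Smooth2.diffAt_x (hf : Smooth2 Ω f) {p : Vec m × Vec m} (hp : p ∈ Ω) :
    DifferentiableAt ℝ (fun y => f y p.2) p.1 :=
  (hf.hasFDerivAt_x hΩ hp).differentiableAt

theorem pdv_eq (hf : Smooth2 Ω f) {p : Vec m × Vec m} (hp : p ∈ Ω) (i : Fin m) :
    pdv f i p.1 p.2
      = fderiv ℝ (fun q : Vec m × Vec m => f q.1 q.2) p (0, Pi.single i 1) := by
  have h := (hf.hasFDerivAt_v hΩ hp).fderiv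
  simp only [pdv, h, ContinuousLinearMap.coe_comp', Function.comp_apply,
    ContinuousLinearMap.inr_apply]

theorem pdx_eq (hf : Smooth2 Ω f) {p : Vec m × Vec m} (hp : p ∈ Ω) (i : Fin m) :
    pdx f i p.1 p.2
      = fderiv ℝ (fun q : Vec m × Vec m => f q.1 q.2) p (Pi.single i 1, 0) := by
  have h := (hf.hasFDerivAt_x hΩ hp).fderiv
  simp only [pdx, h, ContinuousLinearMap.coe_comp', Function.comp_apply,
    ContinuousLinearMap.inl_apply]

theorem Smooth2.fderiv_smooth (hf : Smooth2 Ω f) :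
    ContDiffOn ℝ (⊤ : ℕ∞) (fderiv ℝ (fun q : Vec m × Vec m => f q.1 q.2)) Ω :=
  hf.fderiv_of_isOpen hΩ (by simp)

theorem Smooth2.pdv (hf : Smooth2 Ω f) (i : Fin m) : Smooth2 Ω (pdv f i) :=
  (((hf.fderiv_smooth hΩ).clm_apply contDiffOn_const)).congr
    (fun p hp => pdv_eq hΩ hf hp i)

theorem Smooth2.pdx (hf : Smooth2 Ω f) (i : Fin m) : Smooth2 Ω (pdx f i) :=
  (((hf.fderiv_smooth hΩ).clm_apply contDiffOn_const)).congr
    (fun p hp => pdx_eq hΩ hf hp i)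

end core

section hom
variable {Ω : Set (Vec m × Vec m)} (hΩ : IsOpen Ω)
  (hcone : ∀ p ∈ Ω, ∀ s : ℝ, 0 < s → (p.1, s • p.2) ∈ Ω)
  {f : Vec m → Vec m → ℝ}
include hΩ hcone

/-- Homogeneity passes to vertical derivatives, lowering the degree by 1. -/
theorem hom2_pdv {k : ℕ} (hf : Smooth2 Ω f) (hh : Hom2 Ω (k + 1) f) (i : Fin m) :
    Hom2 Ω k (pdv f i) := by
  intro p hp s hs
  have hq : (p.1, s • p.2) ∈ Ω := hcone p hp s hs
  have hd1 : DifferentiableAt ℝ (f p.1) (s • p.2) := hf.diffAt_v hΩ hq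
  have hd0 : DifferentiableAt ℝ (f p.1) p.2 := hf.diffAt_v hΩ hp
  -- derivative of w ↦ f p.1 (s • w) at p.2, computed two ways
  have hA : HasFDerivAt (fun w => f p.1 (s • w))
      ((fderiv ℝ (f p.1) (s • p.2)).comp (s • ContinuousLinearMap.id ℝ (Vec m))) p.2 := by
    have hc : HasFDerivAt (fun w : Vec m => s • w)
        (s • ContinuousLinearMap.id ℝ (Vec m)) p.2 := (hasFDerivAt_id p.2).const_smul s
    exact hd1.hasFDerivAt.comp p.2 hc
  have hB : HasFDerivAt (fun w => f p.1 (s • w))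
      (s ^ (k + 1) • fderiv ℝ (f p.1) p.2) p.2 := by
    have h0 : HasFDerivAt (fun w => s ^ (k + 1) * f p.1 w)
        (s ^ (k + 1) • fderiv ℝ (f p.1) p.2) p.2 := hd0.hasFDerivAt.const_smul (s ^ (k + 1))
    apply h0.congr_of_eventuallyEq
    filter_upwards [slice_v_mem_nhds hΩ hp] with w hw
    exact hh (p.1, w) hw s hs
  have := hA.unique hB
  have h2 := congrArg (fun T : Vec m →L[ℝ] ℝ => T (Pi.single i 1)) this
  simp only [ContinuousLinearMap.coe_comp', Function.comp_apply,
    ContinuousLinearMap.coe_smul', Pi.smul_apply, ContinuousLinearMap.coe_id', id_eq,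
    ContinuousLinearMap.smul_apply, smul_eq_mul] at h2
  -- h2 : fderiv (f p.1) (s•p.2) (s • e_i) = s^(k+1) * fderiv (f p.1) p.2 e_i
  have h3 : s * pdv f i p.1 (s • p.2) = s ^ (k + 1) * pdv f i p.1 p.2 := by
    simpa [pdv, map_smul, smul_eq_mul] using h2
  have h4 : s * pdv f i p.1 (s • p.2) = s * (s ^ k * pdv f i p.1 p.2) := by
    rw [h3]; ring
  exact mul_left_cancel₀ (ne_of_gt hs) h4

/-- Homogeneity passes to horizontal derivatives, preserving the degree. -/
theorem hom2_pdx {k : ℕ} (hf : Smooth2 Ω f) (hh : Hom2 Ω k f) (i : Fin m) :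
    Hom2 Ω k (pdx f i) := by
  intro p hp s hs
  have hq : (p.1, s • p.2) ∈ Ω := hcone p hp s hs
  have hev : (fun y => f y (s • p.2)) =ᶠ[nhds p.1] fun y => s ^ k * f y p.2 := by
    have h1 : {y | (y, p.2) ∈ Ω} ∈ nhds p.1 := slice_x_mem_nhds hΩ hp
    filter_upwards [h1] with y hy
    exact hh (y, p.2) hy s hs
  have hd : DifferentiableAt ℝ (fun y => f y p.2) p.1 := hf.diffAt_x hΩ hp
  unfold pdx
  rw [hev.fderiv_eq, fderiv_const_mul hd]
  simp [smul_eq_mul]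

end hom

/-- Euler's theorem for positively homogeneous functions. -/
theorem euler_hom {f : Vec m → Vec m → ℝ} {x v : Vec m} (k : ℕ)
    (hd : DifferentiableAt ℝ (f x) v)
    (hh : ∀ s : ℝ, 0 < s → f x (s • v) = s ^ k * f x v) :
    ∑ ν, pdv f ν x v * v ν = k * f x v := by
  have hc : HasDerivAt (fun s : ℝ => s • v) v 1 := by
    simpa using (hasDerivAt_id (1 : ℝ)).smul_const v
  have h1 : HasDerivAt (fun s : ℝ => f x (s • v)) (fderiv ℝ (f x) v v) 1 := by
    have hd' : HasFDerivAt (f x) (fderiv ℝ (f x) v) ((1:ℝ) • v) := by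
      rw [one_smul]; exact hd.hasFDerivAt
    exact hd'.comp_hasDerivAt 1 hc
  have h2 : HasDerivAt (fun s : ℝ => s ^ k * f x v) ((k : ℝ) * f x v) 1 := by
    simpa using (hasDerivAt_pow k (1 : ℝ)).mul_const (f x v)
  have hev : (fun s : ℝ => f x (s • v)) =ᶠ[nhds 1] fun s => s ^ k * f x v := by
    filter_upwards [eventually_gt_nhds (zero_lt_one)] with s hs
    exact hh s hs
  have h1' : HasDerivAt (fun s : ℝ => s ^ k * f x v) (fderiv ℝ (f x) v v) 1 :=
    h1.congr_of_eventuallyEq hev.symm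
  have hkey : fderiv ℝ (f x) v v = (k : ℝ) * f x v := h1'.unique h2
  have hv : v = ∑ ν, v ν • (Pi.single ν (1 : ℝ) : Vec m) := by
    funext j
    simp [Pi.single_apply, Finset.sum_apply]
  have hms := map_sum (fderiv ℝ (f x) v) (fun ν => v ν • (Pi.single ν (1:ℝ) : Vec m))
    Finset.univ
  rw [← hv] at hms
  calc ∑ ν, pdv f ν x v * v ν
      = fderiv ℝ (f x) v v := by
        rw [hms]
        exact Finset.sum_congr rfl fun ν _ => by simp [pdv, mul_comm]
    _ = (k : ℝ) * f x v := hkey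


section tower
variable {Ω : Set (Vec m × Vec m)} (hΩ : IsOpen Ω)
  (hcone : ∀ p ∈ Ω, ∀ s : ℝ, 0 < s → (p.1, s • p.2) ∈ Ω)
  {L : Vec m → Vec m → ℝ} (hLs : Smooth2 Ω L)
  (hLh : Hom2 Ω 2 L)
  (hLinv : ∀ p ∈ Ω, IsUnit (gmet L p.1 p.2).det)

theorem smooth2_coord (i : Fin m) : Smooth2 Ω (fun _ v => v i) := by
  have : ContDiff ℝ (⊤ : ℕ∞) (fun p : Vec m × Vec m => p.2 i) :=
    (ContinuousLinearMap.contDiff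
      ((ContinuousLinearMap.proj i).comp (ContinuousLinearMap.snd ℝ (Vec m) (Vec m))))
  exact this.contDiffOn

theorem smooth2_det {M : Vec m → Vec m → Matrix (Fin m) (Fin m) ℝ}
    (h : ∀ i j, Smooth2 Ω (fun x v => M x v i j)) :
    Smooth2 Ω (fun x v => (M x v).det) := by
  have key : (fun p : Vec m × Vec m => (M p.1 p.2).det)
      = fun p => ∑ σ : Equiv.Perm (Fin m),
          ((Equiv.Perm.sign σ : ℤ) : ℝ) * ∏ i, M p.1 p.2 (σ i) i :=
    funext fun p => Matrix.det_apply' _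
  show ContDiffOn ℝ (⊤ : ℕ∞) _ Ω
  rw [key]
  apply ContDiffOn.sum
  intro σ _
  apply ContDiffOn.mul contDiffOn_const
  have := contDiffOn_prod' (𝕜 := ℝ) (n := (⊤ : ℕ∞)) (s := Ω) (t := Finset.univ)
    (f := fun i (p : Vec m × Vec m) => M p.1 p.2 (σ i) i) (fun i _ => h (σ i) i)
  exact this.congr (fun p hp => by simp)

include hΩ hLs

theorem smooth2_gmet (α β : Fin m) : Smooth2 Ω (fun x v => gmet L x v α β) :=
  ((hLs.pdv hΩ β).pdv hΩ α)

include hLinv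

theorem smooth2_ginv (α β : Fin m) : Smooth2 Ω (fun x v => ginv L x v α β) := by
  have hadj : Smooth2 Ω (fun x v => (gmet L x v).adjugate α β) := by
    have h1 : ∀ i j, Smooth2 Ω
        (fun x v => (gmet L x v).updateRow β (Pi.single α 1) i j) := by
      intro i j
      by_cases hi : i = β
      · have : (fun x v : Vec m => (gmet L x v).updateRow β (Pi.single α 1) i j)
            = fun (_ _ : Vec m) => ((Pi.single α (1:ℝ) : Vec m) j) := by
          funext x v; simp [Matrix.updateRow_apply, hi]
        rw [this]; exact contDiffOn_const
      · have : (fun x v : Vec m => (gmet L x v).updateRow β (Pi.single α 1) i j)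
            = fun x v => gmet L x v i j := by
          funext x v; simp [Matrix.updateRow_apply, hi]
        rw [this]; exact smooth2_gmet hΩ hLs i j
    have := smooth2_det (M := fun x v => (gmet L x v).updateRow β (Pi.single α 1)) h1
    exact this.congr (fun p hp => by
      show (gmet L p.1 p.2).adjugate α β
          = ((gmet L p.1 p.2).updateRow β (Pi.single α 1)).det
      rw [Matrix.adjugate_apply])
  have hdet : Smooth2 Ω (fun x v => (gmet L x v).det) :=
    smooth2_det (fun i j => smooth2_gmet hΩ hLs i j)
  have hne : ∀ p ∈ Ω, (fun q : Vec m × Vec m => (gmet L q.1 q.2).det) p ≠ 0 :=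
    fun p hp => (hLinv p hp).ne_zero
  have : Smooth2 Ω (fun x v => ((gmet L x v).det)⁻¹ * (gmet L x v).adjugate α β) :=
    (hdet.inv hne).mul hadj
  exact this.congr (fun p hp => by
    show ginv L p.1 p.2 α β = _
    rw [ginv, Matrix.inv_def]
    simp [Ring.inverse_eq_inv'])

theorem smooth2_spray (α : Fin m) : Smooth2 Ω (spray L α) := by
  show ContDiffOn ℝ (⊤ : ℕ∞) (fun p : Vec m × Vec m => spray L α p.1 p.2) Ω
  simp only [spray]
  apply ContDiffOn.mul contDiffOn_const
  apply ContDiffOn.sum; intro δ _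
  apply ContDiffOn.mul (smooth2_ginv hΩ hLs hLinv α δ)
  apply ContDiffOn.sum; intro β _
  apply ContDiffOn.sum; intro γ _
  apply ContDiffOn.mul
  apply ContDiffOn.mul
  · exact (((smooth2_gmet hΩ hLs δ γ).pdx hΩ β).add
      ((smooth2_gmet hΩ hLs δ β).pdx hΩ γ)).sub ((smooth2_gmet hΩ hLs β γ).pdx hΩ δ)
  · exact smooth2_coord β
  · exact smooth2_coord γ

theorem smooth2_nConn (α μ : Fin m) : Smooth2 Ω (nConn L α μ) :=
  (smooth2_spray hΩ hLs hLinv α).pdv hΩ μ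

theorem smooth2_curv (μ α β : Fin m) : Smooth2 Ω (curv (nConn L) μ α β) := by
  show ContDiffOn ℝ (⊤ : ℕ∞) (fun p : Vec m × Vec m => curv (nConn L) μ α β p.1 p.2) Ω
  simp only [curv, hderiv]
  have hN : ∀ a b : Fin m, Smooth2 Ω (nConn L a b) := smooth2_nConn hΩ hLs hLinv
  apply ContDiffOn.sub
  · apply ContDiffOn.sub ((hN μ β).pdx hΩ α)
    apply ContDiffOn.sum; intro ν _
    exact (hN ν α).mul ((hN μ β).pdv hΩ ν)
  · apply ContDiffOn.sub ((hN μ α).pdx hΩ β)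
    apply ContDiffOn.sum; intro ν _
    exact (hN ν β).mul ((hN μ α).pdv hΩ ν)

theorem smooth2_ric : Smooth2 Ω (ricciScalar (nConn L)) := by
  show ContDiffOn ℝ (⊤ : ℕ∞) (fun p : Vec m × Vec m => ricciScalar (nConn L) p.1 p.2) Ω
  simp only [ricciScalar]
  apply ContDiffOn.sum; intro α _
  apply ContDiffOn.mul _ (smooth2_coord α)
  apply ContDiffOn.sum; intro μ _
  exact smooth2_curv hΩ hLs hLinv μ μ α

-- Homogeneity tower
include hcone hLh
omit hLinv in
theorem hom2_gmet (α β : Fin m) : Hom2 Ω 0 (fun x v => gmet L x v α β) :=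
  hom2_pdv hΩ hcone (hLs.pdv hΩ β) (hom2_pdv hΩ hcone hLs hLh β) α

omit hLinv in
theorem hom2_gmet_eq {p : Vec m × Vec m} (hp : p ∈ Ω) {s : ℝ} (hs : 0 < s) :
    gmet L p.1 (s • p.2) = gmet L p.1 p.2 := by
  ext i j
  simpa using hom2_gmet hΩ hcone hLs hLh i j p hp s hs

omit hLinv in
theorem hom2_ginv_eq {p : Vec m × Vec m} (hp : p ∈ Ω) {s : ℝ} (hs : 0 < s) :
    ginv L p.1 (s • p.2) = ginv L p.1 p.2 := by
  rw [ginv, ginv, hom2_gmet_eq hΩ hcone hLs hLh hp hs]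

omit hLinv in
theorem hom2_spray (α : Fin m) : Hom2 Ω 2 (spray L α) := by
  intro p hp s hs
  have hgi := hom2_ginv_eq hΩ hcone hLs hLh hp hs
  have hpx : ∀ δ γ β : Fin m,
      pdx (fun y w => gmet L y w δ γ) β p.1 (s • p.2)
        = pdx (fun y w => gmet L y w δ γ) β p.1 p.2 := by
    intro δ γ β
    simpa using hom2_pdx hΩ hcone (smooth2_gmet hΩ hLs δ γ)
      (hom2_gmet hΩ hcone hLs hLh δ γ) β p hp s hs
  have key : ∀ (T : Fin m → Fin m → ℝ),
      (∑ β, ∑ γ, T β γ * (s * p.2 β) * (s * p.2 γ))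
        = s ^ 2 * ∑ β, ∑ γ, T β γ * p.2 β * p.2 γ := by
    intro T
    rw [Finset.mul_sum]
    refine Finset.sum_congr rfl fun β _ => ?_
    rw [Finset.mul_sum]
    refine Finset.sum_congr rfl fun γ _ => ?_
    ring
  have key2 : ∀ (a I : Fin m → ℝ), (∑ δ, a δ * (s ^ 2 * I δ))
      = s ^ 2 * ∑ δ, a δ * I δ := by
    intro a I
    rw [Finset.mul_sum]
    exact Finset.sum_congr rfl fun δ _ => by ring
  simp only [spray, hgi, hpx, Pi.smul_apply, smul_eq_mul, key, key2]
  ring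

theorem hom2_nConn (α μ : Fin m) : Hom2 Ω 1 (nConn L α μ) :=
  hom2_pdv hΩ hcone (smooth2_spray hΩ hLs hLinv α) (hom2_spray hΩ hcone hLs hLh α) μ

theorem hom2_curv (μ α β : Fin m) : Hom2 Ω 1 (curv (nConn L) μ α β) := by
  intro p hp s hs
  have hN : ∀ a b : Fin m, nConn L a b p.1 (s • p.2) = s * nConn L a b p.1 p.2 := by
    intro a b; simpa using hom2_nConn hΩ hcone hLs hLh hLinv a b p hp s hs
  have hpxN : ∀ a b c : Fin m,
      pdx (nConn L a b) c p.1 (s • p.2) = s * pdx (nConn L a b) c p.1 p.2 := by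
    intro a b c
    simpa using hom2_pdx hΩ hcone (smooth2_nConn hΩ hLs hLinv a b)
      (hom2_nConn hΩ hcone hLs hLh hLinv a b) c p hp s hs
  have hpvN : ∀ a b c : Fin m,
      pdv (nConn L a b) c p.1 (s • p.2) = pdv (nConn L a b) c p.1 p.2 := by
    intro a b c
    simpa using hom2_pdv hΩ hcone (smooth2_nConn hΩ hLs hLinv a b)
      (hom2_nConn hΩ hcone hLs hLh hLinv a b) c p hp s hs
  have key : ∀ (a b : Fin m → ℝ), (∑ ν, s * a ν * b ν) = s * ∑ ν, a ν * b ν := by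
    intro a b
    rw [Finset.mul_sum]
    exact Finset.sum_congr rfl fun ν _ => by ring
  simp only [curv, hderiv, hN, hpxN, hpvN, key, pow_one]
  ring

theorem hom2_ric : Hom2 Ω 2 (ricciScalar (nConn L)) := by
  intro p hp s hs
  have hc : ∀ μ α : Fin m, curv (nConn L) μ μ α p.1 (s • p.2)
      = s * curv (nConn L) μ μ α p.1 p.2 := by
    intro μ α; simpa using hom2_curv hΩ hcone hLs hLh hLinv μ μ α p hp s hs
  simp only [ricciScalar, hc, Pi.smul_apply, smul_eq_mul, ← Finset.mul_sum]
  rw [Finset.mul_sum]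
  exact Finset.sum_congr rfl fun α _ => by ring

end tower

section sym
variable {Ω : Set (Vec m × Vec m)} (hΩ : IsOpen Ω) {L : Vec m → Vec m → ℝ}
  (hLs : Smooth2 Ω L)
include hΩ hLs

theorem gmet_symm {p : Vec m × Vec m} (hp : p ∈ Ω) (α β : Fin m) :
    gmet L p.1 p.2 α β = gmet L p.1 p.2 β α := by
  set S : Set (Vec m) := {w | (p.1, w) ∈ Ω} with hS
  have hS_open : IsOpen S := hΩ.preimage (Continuous.prodMk_right p.1)
  have hpS : p.2 ∈ S := hp
  have hLx : ContDiffOn ℝ (⊤ : ℕ∞) (L p.1) S := by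
    have hmap : ContDiff ℝ (⊤ : ℕ∞) (fun w : Vec m => ((p.1, w) : Vec m × Vec m)) :=
      contDiff_const.prodMk contDiff_id
    exact hLs.comp hmap.contDiffOn (fun w hw => hw)
  set f' : Vec m → (Vec m →L[ℝ] ℝ) := fun w => fderiv ℝ (L p.1) w with hf'
  have hf's : ContDiffOn ℝ (⊤ : ℕ∞) f' S := hLx.fderiv_of_isOpen hS_open (by simp)
  have hdf' : DifferentiableAt ℝ f' p.2 :=
    (hf's.contDiffAt (hS_open.mem_nhds hpS)).differentiableAt (by simp)
  have hev : ∀ᶠ y in nhds p.2, HasFDerivAt (L p.1) (f' y) y := by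
    filter_upwards [hS_open.mem_nhds hpS] with y hy
    exact ((hLx.contDiffAt (hS_open.mem_nhds hy)).differentiableAt (by simp)).hasFDerivAt
  have hsym := second_derivative_symmetric_of_eventually_of_real hev
    hdf'.hasFDerivAt (Pi.single α 1) (Pi.single β 1)
  have key : ∀ i j : Fin m, gmet L p.1 p.2 i j
      = fderiv ℝ f' p.2 (Pi.single i 1) (Pi.single j 1) := by
    intro i j
    show fderiv ℝ (fun w => fderiv ℝ (L p.1) w (Pi.single j 1)) p.2 (Pi.single i 1) = _
    rw [fderiv_clm_apply hdf' (differentiableAt_const _)]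
    simp
  rw [key α β, key β α]
  exact hsym
end sym

section trace
variable {Ω : Set (Vec m × Vec m)} (hΩ : IsOpen Ω) {L : Vec m → Vec m → ℝ}
  (hLs : Smooth2 Ω L) (hLinv : ∀ p ∈ Ω, IsUnit (gmet L p.1 p.2).det)
include hΩ hLs hLinv

theorem ginv_gmet_trace {p : Vec m × Vec m} (hp : p ∈ Ω) :
    ∑ μ, ∑ ν, ginv L p.1 p.2 μ ν * gmet L p.1 p.2 μ ν = (m : ℝ) := by
  have h1 : ginv L p.1 p.2 * gmet L p.1 p.2 = 1 :=
    Matrix.nonsing_inv_mul _ (hLinv p hp)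
  calc ∑ μ, ∑ ν, ginv L p.1 p.2 μ ν * gmet L p.1 p.2 μ ν
      = ∑ μ, ∑ ν, ginv L p.1 p.2 μ ν * gmet L p.1 p.2 ν μ :=
        Finset.sum_congr rfl fun μ _ => Finset.sum_congr rfl fun ν _ => by
          rw [gmet_symm hΩ hLs hp ν μ]
    _ = ∑ μ, (ginv L p.1 p.2 * gmet L p.1 p.2) μ μ :=
        Finset.sum_congr rfl fun μ _ => (Matrix.mul_apply).symm
    _ = (m : ℝ) := by rw [h1]; simp [Matrix.one_apply]
end trace

/-- Section 6, Eq. (cpkt): in dimension `m ≥ 3`, the Akbar-Zadeh vacuum Einstein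
equation `∂²Ric/∂v^α∂v^β − (1/2)(g^{μν}∂²Ric/∂v^μ∂v^ν) g_{αβ} = 0` is equivalent to
`Ric(v) = 0`. -/
theorem statement16 {m : ℕ} (hm : 3 ≤ m)
    (Ω : Set (Vec m × Vec m)) (hΩopen : IsOpen Ω) (hΩne : Ω.Nonempty)
    (hΩslit : ∀ p ∈ Ω, p.2 ≠ 0)
    (hΩcone : ∀ p ∈ Ω, ∀ s : ℝ, 0 < s → (p.1, s • p.2) ∈ Ω)
    (L : Vec m → Vec m → ℝ)
    (hLsmooth : ContDiffOn ℝ (⊤ : ℕ∞) (fun p : Vec m × Vec m => L p.1 p.2) Ω)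
    (hLhom : ∀ p ∈ Ω, ∀ s : ℝ, 0 < s → L p.1 (s • p.2) = s ^ 2 * L p.1 p.2)
    (hLinv : ∀ p ∈ Ω, IsUnit (gmet L p.1 p.2).det)
    : (∀ p ∈ Ω, ∀ α β,
        pdv (pdv (ricciScalar (nConn L)) β) α p.1 p.2
          - (1/2) * (∑ μ, ∑ ν, ginv L p.1 p.2 μ ν
              * pdv (pdv (ricciScalar (nConn L)) ν) μ p.1 p.2)
            * gmet L p.1 p.2 α β = 0)
      ↔ (∀ p ∈ Ω, ricciScalar (nConn L) p.1 p.2 = 0) := by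
  have hLs : Smooth2 Ω L := hLsmooth
  have hRs : Smooth2 Ω (ricciScalar (nConn L)) := smooth2_ric hΩopen hLs hLinv
  have hRh : Hom2 Ω 2 (ricciScalar (nConn L)) := hom2_ric hΩopen hΩcone hLs hLhom hLinv
  constructor
  · -- Einstein equation ⇒ Ric = 0
    intro heq p hp
    -- Step 1: the trace T vanishes at every point of Ω
    have hT : ∀ q ∈ Ω, (∑ μ, ∑ ν, ginv L q.1 q.2 μ ν
        * pdv (pdv (ricciScalar (nConn L)) ν) μ q.1 q.2) = 0 := by
      intro q hq
      set T := ∑ μ, ∑ ν, ginv L q.1 q.2 μ ν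
        * pdv (pdv (ricciScalar (nConn L)) ν) μ q.1 q.2 with hTdef
      have hH : ∀ α β, pdv (pdv (ricciScalar (nConn L)) β) α q.1 q.2
          = (1/2) * T * gmet L q.1 q.2 α β := by
        intro α β
        have := heq q hq α β
        linarith [this]
      have key : ∀ (c : ℝ) (G A : Fin m → Fin m → ℝ),
          (∑ μ, ∑ ν, G μ ν * (c * A μ ν)) = c * ∑ μ, ∑ ν, G μ ν * A μ ν := by
        intro c G A
        rw [Finset.mul_sum]
        refine Finset.sum_congr rfl fun μ _ => ?_
        rw [Finset.mul_sum]
        exact Finset.sum_congr rfl fun ν _ => by ring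
      have hTeq : T = (1/2) * T * (m : ℝ) := by
        have h0 : T = ∑ μ, ∑ ν, ginv L q.1 q.2 μ ν
            * (((1/2) * T) * gmet L q.1 q.2 μ ν) := by
          conv_lhs => rw [hTdef]
          exact Finset.sum_congr rfl fun μ _ => Finset.sum_congr rfl fun ν _ => by
            rw [hH μ ν]
        rw [key ((1/2) * T) (fun μ ν => ginv L q.1 q.2 μ ν)
          (fun μ ν => gmet L q.1 q.2 μ ν)] at h0
        rw [ginv_gmet_trace hΩopen hLs hLinv hq] at h0
        linarith [h0]
      have hm3 : (3 : ℝ) ≤ (m : ℝ) := by exact_mod_cast hm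
      nlinarith [hTeq]
    -- Step 2: vertical Hessian of Ric vanishes on Ω
    have hHzero : ∀ q ∈ Ω, ∀ α β,
        pdv (pdv (ricciScalar (nConn L)) β) α q.1 q.2 = 0 := by
      intro q hq α β
      have := heq q hq α β
      rw [hT q hq] at this
      linarith [this]
    -- Step 3: first vertical derivatives of Ric vanish at p
    have hfirst : ∀ ν, pdv (ricciScalar (nConn L)) ν p.1 p.2 = 0 := by
      intro ν
      have hhom1 : ∀ s : ℝ, 0 < s → pdv (ricciScalar (nConn L)) ν p.1 (s • p.2)
          = s ^ 1 * pdv (ricciScalar (nConn L)) ν p.1 p.2 :=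
        fun s hs => hom2_pdv hΩopen hΩcone hRs hRh ν p hp s hs
      have hd : DifferentiableAt ℝ (pdv (ricciScalar (nConn L)) ν p.1) p.2 :=
        (hRs.pdv hΩopen ν).diffAt_v hΩopen hp
      have := euler_hom 1 hd hhom1
      have hz : ∑ μ, pdv (pdv (ricciScalar (nConn L)) ν) μ p.1 p.2 * p.2 μ = 0 :=
        Finset.sum_eq_zero fun μ _ => by rw [hHzero p hp μ ν]; ring
      rw [hz] at this
      simpa using this.symm
    -- Step 4: Euler for Ric itself
    have hd2 : DifferentiableAt ℝ (ricciScalar (nConn L) p.1) p.2 :=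
      hRs.diffAt_v hΩopen hp
    have h2 := euler_hom 2 hd2 (fun s hs => hRh p hp s hs)
    have hz2 : ∑ ν, pdv (ricciScalar (nConn L)) ν p.1 p.2 * p.2 ν = 0 :=
      Finset.sum_eq_zero fun ν _ => by rw [hfirst ν]; ring
    rw [hz2] at h2
    have : (2 : ℝ) * ricciScalar (nConn L) p.1 p.2 = 0 := by simpa using h2.symm
    linarith
  · -- Ric = 0 ⇒ Einstein equation
    intro hric p hp α β
    have hpdvzero : ∀ q ∈ Ω, ∀ ν, pdv (ricciScalar (nConn L)) ν q.1 q.2 = 0 := by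
      intro q hq ν
      have hev : ricciScalar (nConn L) q.1 =ᶠ[nhds q.2] fun _ => (0 : ℝ) := by
        filter_upwards [slice_v_mem_nhds hΩopen hq] with w hw
        exact hric (q.1, w) hw
      show fderiv ℝ (ricciScalar (nConn L) q.1) q.2 (Pi.single ν 1) = 0
      rw [hev.fderiv_eq]
      simp
    have hpdv2zero : ∀ ν' α', pdv (pdv (ricciScalar (nConn L)) ν') α' p.1 p.2 = 0 := by
      intro ν' α'
      have hev : pdv (ricciScalar (nConn L)) ν' p.1 =ᶠ[nhds p.2] fun _ => (0 : ℝ) := by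
        filter_upwards [slice_v_mem_nhds hΩopen hp] with w hw
        exact hpdvzero (p.1, w) hw ν'
      show fderiv ℝ (pdv (ricciScalar (nConn L)) ν' p.1) p.2 (Pi.single α' 1) = 0
      rw [hev.fderiv_eq]
      simp
    simp [hpdv2zero]
end
end
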